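/- Let (C, Ω) be a category with V-face such that C is a monoidal category with unit object I and Ω is a monoidal functor with structure isomorphisms (φ₂)_{X,Y} : Ω(X) ⊗_R Ω(Y) ≅ Ω(X ⊗ Y) and φ₀ : R ≅ Ω(I). Then the maps m = C(⊗, φ₂) ∘ φ₂ : C(Ω) ⊗_E C(Ω) → C(Ω) and η = C(I, φ₀) : E → C(Ω) make (C(Ω), m, η) a monoid in the monoidal category DrCoalg_V of V-dressed coalgebras, and hence C(Ω) is a V-face algebra; moreover Ω lifts to a monoidal functor from C to com(C(Ω)). -/

import Mathlib

open TensorProduct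

/-- A `V`-face algebra structure on a `K`-algebra `H`: a coalgebra structure
`(comul, counit)` together with the face idempotents `eo l` (the elements `λ̊`)
and `ep l` (the elements `λ`), images of the canonical algebra-coalgebra map
`E = R̊ ⊗ R → H`, satisfying the face algebra axioms. -/
structure VFace (K : Type) [Field K] (V : Type) [Fintype V] [DecidableEq V]
    (H : Type) [Ring H] [Algebra K H] where
  comul : H →ₗ[K] H ⊗[K] H
  counit : H →ₗ[K] K
  coassoc : ∀ a : H,
    (TensorProduct.assoc K H H H) ((TensorProduct.map comul LinearMap.id) (comul a)) =
      (TensorProduct.map LinearMap.id comul) (comul a)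
  counit_comul : ∀ a : H,
    (TensorProduct.lid K H) ((TensorProduct.map counit LinearMap.id) (comul a)) = a
  comul_counit : ∀ a : H,
    (TensorProduct.rid K H) ((TensorProduct.map LinearMap.id counit) (comul a)) = a
  /-- the face idempotents `λ̊` -/
  eo : V → H
  /-- the face idempotents `λ` -/
  ep : V → H
  eo_orth : ∀ l m : V, eo l * eo m = if l = m then eo l else 0
  ep_orth : ∀ l m : V, ep l * ep m = if l = m then ep l else 0
  eo_ep_comm : ∀ l m : V, eo l * ep m = ep m * eo l
  sum_eo : ∑ l : V, eo l = 1
  sum_ep : ∑ l : V, ep l = 1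
  comul_face : ∀ l m : V,
    comul (eo l * ep m) = ∑ n : V, (eo l * ep n) ⊗ₜ[K] (eo n * ep m)
  counit_face : ∀ l m : V, counit (eo l * ep m) = if l = m then 1 else 0
  comul_mul : ∀ a b : H, comul (a * b) = comul a * comul b
  counit_mul : ∀ a b : H,
    counit (a * b) = ∑ n : V, counit (a * ep n) * counit (eo n * b)

namespace VFace

variable {K : Type} [Field K] {V : Type} [Fintype V] [DecidableEq V]
  {H : Type} [Ring H] [Algebra K H]

/-- `S : H → H` is an antipode for the `V`-face algebra `H`:
`Σ S(a₍₁₎)a₍₂₎ = Σ_ν ε(aν)ν`, `Σ a₍₁₎S(a₍₂₎) = Σ_ν ε(νa)ν̊` and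
`Σ S(a₍₁₎)a₍₂₎S(a₍₃₎) = S(a)`. -/
def IsAntipode (F : VFace K V H) (S : H →ₗ[K] H) : Prop :=
  (∀ a : H, (LinearMap.mul' K H) ((TensorProduct.map S LinearMap.id) (F.comul a)) =
      ∑ n : V, F.counit (a * F.ep n) • F.ep n) ∧
  (∀ a : H, (LinearMap.mul' K H) ((TensorProduct.map LinearMap.id S) (F.comul a)) =
      ∑ n : V, F.counit (F.ep n * a) • F.eo n) ∧
  (∀ a : H, (LinearMap.mul' K H) ((TensorProduct.map (LinearMap.mul' K H) LinearMap.id)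
      ((TensorProduct.map (TensorProduct.map S LinearMap.id) S)
        ((TensorProduct.map F.comul LinearMap.id) (F.comul a)))) = S a)

end VFace

section Stmt0

variable {K : Type} [Field K] {V : Type} [Fintype V] [DecidableEq V]

section Dressed

variable (K : Type) [Field K] (V : Type) [Fintype V] [DecidableEq V]

/-- An `E`-bimodule structure on a `K`-vector space, where `E = R̊ ⊗ R` is the
span of the orthogonal idempotents `λ̊μ` (indexed by `V × V`): commuting unital
left and right actions, encoded by the action operators of the idempotents. -/
structure EBim (C : Type) [AddCommGroup C] [Module K C] where
  /-- left action of the idempotent `λ̊μ` -/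
  eL : V × V → C →ₗ[K] C
  /-- right action of the idempotent `λ̊μ` -/
  eR : V × V → C →ₗ[K] C
  eL_orth : ∀ p q : V × V, eL p ∘ₗ eL q = if p = q then eL p else 0
  eR_orth : ∀ p q : V × V, eR p ∘ₗ eR q = if p = q then eR p else 0
  eLR_comm : ∀ p q : V × V, eL p ∘ₗ eR q = eR q ∘ₗ eL p
  sum_eL : ∑ p : V × V, eL p = LinearMap.id
  sum_eR : ∑ p : V × V, eR p = LinearMap.id

namespace EBim

variable {K V} {C : Type} [AddCommGroup C] [Module K C]

/-- left action of `λ̊` -/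
def oL (B : EBim K V C) (l : V) : C →ₗ[K] C := ∑ m : V, B.eL (l, m)

/-- left action of the "plain" element `μ` -/
def pL (B : EBim K V C) (m : V) : C →ₗ[K] C := ∑ l : V, B.eL (l, m)

/-- right action of `λ̊` -/
def oR (B : EBim K V C) (l : V) : C →ₗ[K] C := ∑ m : V, B.eR (l, m)

/-- right action of the "plain" element `μ` -/
def pR (B : EBim K V C) (m : V) : C →ₗ[K] C := ∑ l : V, B.eR (l, m)

end EBim

/-- A `V`-dressed coalgebra: a `K`-coalgebra with an `E`-bimodule structure
satisfying the compatibilities (9)–(11) of Hayashi's paper. -/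
structure DressedStruct (C : Type) [AddCommGroup C] [Module K C]
    extends EBim K V C where
  comul : C →ₗ[K] C ⊗[K] C
  counit : C →ₗ[K] K
  coassoc : ∀ c : C,
    (TensorProduct.assoc K C C C) ((TensorProduct.map comul LinearMap.id) (comul c)) =
      (TensorProduct.map LinearMap.id comul) (comul c)
  counit_comul : ∀ c : C,
    (TensorProduct.lid K C) ((TensorProduct.map counit LinearMap.id) (comul c)) = c
  comul_counit : ∀ c : C,
    (TensorProduct.rid K C) ((TensorProduct.map LinearMap.id counit) (comul c)) = c
  /-- `Δ(λ̊μ c λ̊'μ') = Σ λ̊ c₍₁₎ λ̊' ⊗ μ c₍₂₎ μ'` -/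
  comul_act : ∀ (p q : V × V) (c : C),
    comul (eL p (eR q c)) =
      (TensorProduct.map (toEBim.oL p.1 ∘ₗ toEBim.oR q.1)
        (toEBim.pL p.2 ∘ₗ toEBim.pR q.2)) (comul c)
  /-- `Σ λ c₍₁₎ μ ⊗ c₍₂₎ = Σ c₍₁₎ ⊗ λ̊ c₍₂₎ μ̊` -/
  exch : ∀ (l m : V) (c : C),
    (TensorProduct.map (toEBim.pL l ∘ₗ toEBim.pR m) LinearMap.id) (comul c) =
      (TensorProduct.map LinearMap.id (toEBim.oL l ∘ₗ toEBim.oR m)) (comul c)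
  /-- `ε(λ̊ c μ̊) = ε(λ c μ)` -/
  counit_act : ∀ (l m : V) (c : C),
    counit (toEBim.oL l (toEBim.oR m c)) = counit (toEBim.pL l (toEBim.pR m c))

/-- `f` is a map of `V`-dressed coalgebras (a coalgebra map which is also an
`E`-bimodule map). -/
def IsDrMap {C D : Type} [AddCommGroup C] [Module K C] [AddCommGroup D] [Module K D]
    (DC : DressedStruct K V C) (DD : DressedStruct K V D) (f : C →ₗ[K] D) : Prop :=
  (∀ c : C, DD.comul (f c) = (TensorProduct.map f f) (DC.comul c)) ∧
  (∀ c : C, DD.counit (f c) = DC.counit c) ∧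
  (∀ (p : V × V) (c : C), f (DC.eL p c) = DD.eL p (f c)) ∧
  (∀ (p : V × V) (c : C), f (DC.eR p c) = DD.eR p (f c))

/-- The subspace of `C ⊗[K] D` by which one divides to obtain the tensor
product `C ⊗_E D` of `E`-bimodules. -/
noncomputable def dbal {C D : Type} [AddCommGroup C] [Module K C]
    [AddCommGroup D] [Module K D] (A : EBim K V C) (B : EBim K V D) :
    Submodule K (C ⊗[K] D) :=
  Submodule.span K {z | ∃ (p : V × V) (c : C) (d : D),
    z = (A.eR p c) ⊗ₜ[K] d - c ⊗ₜ[K] (B.eL p d)}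

/-- The underlying vector space of `C ⊗_E D`. -/
noncomputable abbrev DTensor {C D : Type} [AddCommGroup C] [Module K C]
    [AddCommGroup D] [Module K D] (A : EBim K V C) (B : EBim K V D) : Type :=
  (C ⊗[K] D) ⧸ dbal K V A B

/-- The defining formulas for the `V`-dressed coalgebra structure on the tensor
product `C ⊗_E D` of two `V`-dressed coalgebras:
`Δ(c ⊗_E d) = Σ (c₍₁₎ ⊗_E d₍₁₎) ⊗ (c₍₂₎ ⊗_E d₍₂₎)`,
`ε(c ⊗_E d) = Σ_ν ε(cν) ε(νd)`, and the `E`-actions through the outer factors. -/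
def IsDTensorStruct {C D : Type} [AddCommGroup C] [Module K C]
    [AddCommGroup D] [Module K D] (DC : DressedStruct K V C) (DD : DressedStruct K V D)
    (DT : DressedStruct K V (DTensor K V DC.toEBim DD.toEBim)) : Prop :=
  (∀ (c : C) (d : D),
    DT.comul ((dbal K V DC.toEBim DD.toEBim).mkQ (c ⊗ₜ[K] d)) =
      (TensorProduct.map (dbal K V DC.toEBim DD.toEBim).mkQ
          (dbal K V DC.toEBim DD.toEBim).mkQ)
        ((TensorProduct.tensorTensorTensorComm K C C D D)
          (DC.comul c ⊗ₜ[K] DD.comul d))) ∧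
  (∀ (c : C) (d : D),
    DT.counit ((dbal K V DC.toEBim DD.toEBim).mkQ (c ⊗ₜ[K] d)) =
      ∑ n : V, DC.counit (DC.toEBim.pR n c) * DD.counit (DD.toEBim.pL n d)) ∧
  (∀ (p : V × V) (c : C) (d : D),
    DT.eL p ((dbal K V DC.toEBim DD.toEBim).mkQ (c ⊗ₜ[K] d)) =
      (dbal K V DC.toEBim DD.toEBim).mkQ ((DC.eL p c) ⊗ₜ[K] d)) ∧
  (∀ (p : V × V) (c : C) (d : D),
    DT.eR p ((dbal K V DC.toEBim DD.toEBim).mkQ (c ⊗ₜ[K] d)) =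
      (dbal K V DC.toEBim DD.toEBim).mkQ (c ⊗ₜ[K] (DD.eR p d)))

/-- The `V`-dressed coalgebra `E` itself: the defining formulas on the
canonical basis `{λ̊μ}` of `E = V × V → K`. -/
def IsEStruct (D : DressedStruct K V (V × V → K)) : Prop :=
  (∀ p : V × V, D.comul (Pi.single p 1) =
    ∑ n : V, (Pi.single (p.1, n) 1 : V × V → K) ⊗ₜ[K] (Pi.single (n, p.2) 1 : V × V → K)) ∧
  (∀ p : V × V, D.counit (Pi.single p 1) = if p.1 = p.2 then 1 else 0) ∧
  (∀ p q : V × V, D.eL p (Pi.single q 1) =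
    if p = q then (Pi.single q 1 : V × V → K) else 0) ∧
  (∀ p q : V × V, D.eR p (Pi.single q 1) =
    if p = q then (Pi.single q 1 : V × V → K) else 0)

end Dressed
section MonoidInDr

variable (K : Type) [Field K] (V : Type) [Fintype V] [DecidableEq V]

/-- A monoid structure on a `V`-dressed coalgebra `H`, in the monoidal category
`DrCoalg_V`: an `E`-balanced multiplication `mul : H ⊗_E H → H` and a unit
`η : E → H` which are maps of `V`-dressed coalgebras and satisfy the monoid
axioms. -/
structure MonoidInDr {Hh : Type} [AddCommGroup Hh] [Module K Hh]
    (D : DressedStruct K V Hh) (mul : Hh →ₗ[K] Hh →ₗ[K] Hh)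
    (η : (V × V → K) →ₗ[K] Hh) : Prop where
  balanced : ∀ (p : V × V) (a b : Hh), mul (D.eR p a) b = mul a (D.eL p b)
  map_eL : ∀ (p : V × V) (a b : Hh), mul (D.eL p a) b = D.eL p (mul a b)
  map_eR : ∀ (p : V × V) (a b : Hh), mul a (D.eR p b) = D.eR p (mul a b)
  comul_mul : ∀ a b : Hh,
    D.comul (mul a b) =
      (TensorProduct.map (TensorProduct.lift mul) (TensorProduct.lift mul))
        ((TensorProduct.tensorTensorTensorComm K Hh Hh Hh Hh)
          (D.comul a ⊗ₜ[K] D.comul b))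
  counit_mul : ∀ a b : Hh,
    D.counit (mul a b) =
      ∑ n : V, D.counit (D.toEBim.pR n a) * D.counit (D.toEBim.pL n b)
  comul_eta : ∀ p : V × V,
    D.comul (η (Pi.single p 1)) =
      ∑ n : V, (η (Pi.single (p.1, n) 1)) ⊗ₜ[K] (η (Pi.single (n, p.2) 1))
  counit_eta : ∀ p : V × V, D.counit (η (Pi.single p 1)) = if p.1 = p.2 then 1 else 0
  eta_eL : ∀ p q : V × V,
    D.eL p (η (Pi.single q 1)) = if p = q then η (Pi.single q 1) else 0
  eta_eR : ∀ p q : V × V,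
    D.eR p (η (Pi.single q 1)) = if p = q then η (Pi.single q 1) else 0
  mul_assoc : ∀ a b c : Hh, mul (mul a b) c = mul a (mul b c)
  one_mul : ∀ a : Hh, mul (η 1) a = a
  mul_one : ∀ a : Hh, mul a (η 1) = a

variable {K V}

/-- The ring structure on a monoid in `DrCoalg_V`. -/
noncomputable def ringOf {Hh : Type} [AddCommGroup Hh] [Module K Hh]
    {D : DressedStruct K V Hh} {mul : Hh →ₗ[K] Hh →ₗ[K] Hh}
    {η : (V × V → K) →ₗ[K] Hh} (h : MonoidInDr K V D mul η) : Ring Hh :=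
  { (inferInstance : AddCommGroup Hh) with
    mul := fun a b => mul a b
    one := η 1
    mul_assoc := h.mul_assoc
    one_mul := h.one_mul
    mul_one := h.mul_one
    left_distrib := fun a b c => map_add (mul a) b c
    right_distrib := fun a b c => by
      show mul (a + b) c = mul a c + mul b c
      rw [map_add]; rfl
    zero_mul := fun a => by show mul 0 a = 0; rw [map_zero]; rfl
    mul_zero := fun a => by show mul a 0 = 0; rw [map_zero] }

/-- The `K`-algebra structure on a monoid in `DrCoalg_V`. -/
noncomputable def algebraOf {Hh : Type} [AddCommGroup Hh] [Module K Hh]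
    {D : DressedStruct K V Hh} {mul : Hh →ₗ[K] Hh →ₗ[K] Hh}
    {η : (V × V → K) →ₗ[K] Hh} (h : MonoidInDr K V D mul η) :
    @Algebra K Hh _ (ringOf h).toSemiring :=
  let M : Module K Hh := inferInstance
  letI := ringOf h
  @Algebra.ofModule K Hh _ _ M
    (fun r x y => by
      show mul (r • x) y = r • mul x y
      rw [map_smul]; rfl)
    (fun r x y => by
      show mul x (r • y) = r • mul x y
      rw [map_smul])

end MonoidInDr
section BmdR

open CategoryTheory

variable (K : Type) [Field K] (V : Type) [Fintype V] [DecidableEq V]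

/-- A finite-dimensional `R`-bimodule, where `R = R_V` is the `K`-span of the
orthogonal idempotents `λ ∈ V`: a finite-dimensional `K`-vector space with
commuting unital left and right actions of `R`, encoded by the action
operators of the idempotents. -/
structure Bmd where
  M : Type
  [acg : AddCommGroup M]
  [mod : Module K M]
  [fd : FiniteDimensional K M]
  /-- left action of `λ ∈ V` -/
  aL : V → M →ₗ[K] M
  /-- right action of `λ ∈ V` -/
  aR : V → M →ₗ[K] M
  aL_orth : ∀ l m : V, aL l ∘ₗ aL m = if l = m then aL l else 0
  aR_orth : ∀ l m : V, aR l ∘ₗ aR m = if l = m then aR l else 0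
  aLR_comm : ∀ l m : V, aL l ∘ₗ aR m = aR m ∘ₗ aL l
  sum_aL : ∑ l : V, aL l = LinearMap.id
  sum_aR : ∑ l : V, aR l = LinearMap.id

attribute [instance] Bmd.acg Bmd.mod Bmd.fd

variable {K V}

/-- Maps of `R`-bimodules. -/
def IsBmdMap (M N : Bmd K V) (f : M.M →ₗ[K] N.M) : Prop :=
  (∀ l : V, f ∘ₗ M.aL l = N.aL l ∘ₗ f) ∧ (∀ l : V, f ∘ₗ M.aR l = N.aR l ∘ₗ f)

variable (K V)

/-- The category `bmd(R)` of finite-dimensional `R`-bimodules. -/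
noncomputable instance Bmd.category : Category (Bmd K V) where
  Hom M N := {f : M.M →ₗ[K] N.M // IsBmdMap M N f}
  id M := ⟨LinearMap.id, fun l => by simp, fun l => by simp⟩
  comp {M N P} f g := ⟨g.1 ∘ₗ f.1, by
    obtain ⟨fl, fr⟩ := f.2
    obtain ⟨gl, gr⟩ := g.2
    constructor
    · intro l
      rw [LinearMap.comp_assoc, fl l, ← LinearMap.comp_assoc, gl l, LinearMap.comp_assoc]
    · intro l
      rw [LinearMap.comp_assoc, fr l, ← LinearMap.comp_assoc, gr l, LinearMap.comp_assoc]⟩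
  id_comp f := Subtype.ext (LinearMap.comp_id f.1)
  comp_id f := Subtype.ext (LinearMap.id_comp f.1)
  assoc f g h := Subtype.ext (LinearMap.comp_assoc f.1 g.1 h.1).symm

variable {K V}

@[simp] lemma Bmd.id_coe (M : Bmd K V) : (𝟙 M : M ⟶ M).1 = LinearMap.id := rfl

@[simp] lemma Bmd.comp_coe {M N P : Bmd K V} (f : M ⟶ N) (g : N ⟶ P) :
    (f ≫ g).1 = g.1 ∘ₗ f.1 := rfl

end BmdR

section Coend

open CategoryTheory

variable (K : Type) [Field K] (V : Type) [Fintype V] [DecidableEq V]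
variable {C : Type} [SmallCategory C] (Ω : C ⥤ Bmd K V)

/-- The component `Ω(X)* ⊗ Ω(X)` of the functor whose coend is `C(Ω)`. -/
abbrev dMc (X : C) : Type := ((Ω.obj X).M →ₗ[K] K) ⊗[K] (Ω.obj X).M

/-- The free vector space on the pairs `(m*, m)` with `m* ∈ Ω(X)*`, `m ∈ Ω(X)`,
`X ∈ ob C`. -/
abbrev PreCoend : Type :=
  (Σ X : C, ((Ω.obj X).M →ₗ[K] K) × (Ω.obj X).M) →₀ K

/-- The relations presenting the coend `C(Ω)` of `Ω* ⊗ Ω` as a quotient of the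
free vector space `PreCoend`: bilinearity in `(m*, m)` and the coend
(dinaturality) relations `(f*(m*)) ⊗ m ∼ m* ⊗ f(m)`. -/
noncomputable def coendRel : Submodule K (PreCoend K V Ω) :=
  Submodule.span K
    ({z | ∃ (X : C) (g g' : (Ω.obj X).M →ₗ[K] K) (m : (Ω.obj X).M),
        z = Finsupp.single ⟨X, g + g', m⟩ (1 : K) -
            Finsupp.single ⟨X, g, m⟩ 1 - Finsupp.single ⟨X, g', m⟩ 1} ∪
     {z | ∃ (X : C) (c : K) (g : (Ω.obj X).M →ₗ[K] K) (m : (Ω.obj X).M),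
        z = Finsupp.single ⟨X, c • g, m⟩ (1 : K) -
            c • Finsupp.single ⟨X, g, m⟩ 1} ∪
     {z | ∃ (X : C) (g : (Ω.obj X).M →ₗ[K] K) (m m' : (Ω.obj X).M),
        z = Finsupp.single ⟨X, g, m + m'⟩ (1 : K) -
            Finsupp.single ⟨X, g, m⟩ 1 - Finsupp.single ⟨X, g, m'⟩ 1} ∪
     {z | ∃ (X : C) (c : K) (g : (Ω.obj X).M →ₗ[K] K) (m : (Ω.obj X).M),
        z = Finsupp.single ⟨X, g, c • m⟩ (1 : K) -
            c • Finsupp.single ⟨X, g, m⟩ 1} ∪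
     {z | ∃ (X Y : C) (f : X ⟶ Y) (g : (Ω.obj Y).M →ₗ[K] K) (m : (Ω.obj X).M),
        z = Finsupp.single ⟨X, g ∘ₗ (Ω.map f).1, m⟩ (1 : K) -
            Finsupp.single ⟨Y, g, (Ω.map f).1 m⟩ 1})

/-- The underlying vector space of the coend `C(Ω)` of `Ω* ⊗ Ω`. -/
noncomputable abbrev CoendT : Type := PreCoend K V Ω ⧸ coendRel K V Ω

/-- The universal dinatural transformation
`κ_X : Ω(X)* ⊗ Ω(X) → C(Ω)`. -/
noncomputable def coendK (X : C) : dMc K V Ω X →ₗ[K] CoendT K V Ω :=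
  TensorProduct.lift (LinearMap.mk₂ K
    (fun g m => (coendRel K V Ω).mkQ (Finsupp.single ⟨X, g, m⟩ (1 : K)))
    (fun g g' m => by
      beta_reduce
      rw [← map_add, Submodule.mkQ_apply, Submodule.mkQ_apply, Submodule.Quotient.eq]
      exact Submodule.subset_span (Or.inl (Or.inl (Or.inl (Or.inl
        ⟨X, g, g', m, (sub_sub _ _ _).symm⟩)))))
    (fun c g m => by
      beta_reduce
      rw [← map_smul, Submodule.mkQ_apply, Submodule.mkQ_apply, Submodule.Quotient.eq]
      exact Submodule.subset_span (Or.inl (Or.inl (Or.inl (Or.inr ⟨X, c, g, m, rfl⟩)))))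
    (fun g m m' => by
      beta_reduce
      rw [← map_add, Submodule.mkQ_apply, Submodule.mkQ_apply, Submodule.Quotient.eq]
      exact Submodule.subset_span (Or.inl (Or.inl (Or.inr
        ⟨X, g, m, m', (sub_sub _ _ _).symm⟩))))
    (fun c g m => by
      beta_reduce
      rw [← map_smul, Submodule.mkQ_apply, Submodule.mkQ_apply, Submodule.Quotient.eq]
      exact Submodule.subset_span (Or.inl (Or.inr ⟨X, c, g, m, rfl⟩))))

/-- The coalgebra comultiplication on `C(Ω)` is determined by
`Δ(κ_X(m* ⊗ m)) = Σ_j κ_X(m* ⊗ m_j) ⊗ κ_X(m^j ⊗ m)` for any finite basis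
`{m_j}` of `Ω(X)` with dual basis `{m^j}`. -/
def CoendComulSpec (comul : CoendT K V Ω →ₗ[K] CoendT K V Ω ⊗[K] CoendT K V Ω) : Prop :=
  ∀ (X : C) (ι : Type) (_ : Fintype ι) (b : Module.Basis ι K (Ω.obj X).M)
    (g : (Ω.obj X).M →ₗ[K] K) (m : (Ω.obj X).M),
    comul (coendK K V Ω X (g ⊗ₜ[K] m)) =
      ∑ j : ι, (coendK K V Ω X (g ⊗ₜ[K] b j)) ⊗ₜ[K] (coendK K V Ω X (b.coord j ⊗ₜ[K] m))

/-- The counit of `C(Ω)` is determined by `ε(κ_X(m* ⊗ m)) = ⟨m*, m⟩`. -/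
def CoendCounitSpec (counit : CoendT K V Ω →ₗ[K] K) : Prop :=
  ∀ (X : C) (g : (Ω.obj X).M →ₗ[K] K) (m : (Ω.obj X).M),
    counit (coendK K V Ω X (g ⊗ₜ[K] m)) = g m

/-- The `E`-bimodule structure of `C(Ω)`, induced by
`λ̊μ (n ⊗ m) λ̊'μ' = λ̊ n λ̊' ⊗ μ m μ'` on `Ω(X)* ⊗ Ω(X)`. -/
def CoendBimSpec (B : EBim K V (CoendT K V Ω)) : Prop :=
  ∀ (p : V × V) (X : C) (g : (Ω.obj X).M →ₗ[K] K) (m : (Ω.obj X).M),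
    B.eL p (coendK K V Ω X (g ⊗ₜ[K] m)) =
      coendK K V Ω X ((g ∘ₗ (Ω.obj X).aL p.1) ⊗ₜ[K] ((Ω.obj X).aL p.2 m)) ∧
    B.eR p (coendK K V Ω X (g ⊗ₜ[K] m)) =
      coendK K V Ω X ((g ∘ₗ (Ω.obj X).aR p.1) ⊗ₜ[K] ((Ω.obj X).aR p.2 m))

/-- The full `V`-dressed coalgebra structure of the coend `C(Ω)`. -/
def CoendDressedSpec (D : DressedStruct K V (CoendT K V Ω)) : Prop :=
  CoendComulSpec K V Ω D.comul ∧ CoendCounitSpec K V Ω D.counit ∧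
    CoendBimSpec K V Ω D.toEBim

/-- The right `C(Ω)`-comodule structure
`δ_X(m) = Σ_i m_i ⊗ κ_X(m^i ⊗ m)` on `Ω(X)`. -/
noncomputable def coendDelta (X : C) :
    (Ω.obj X).M →ₗ[K] (Ω.obj X).M ⊗[K] CoendT K V Ω :=
  ∑ i, (TensorProduct.mk K (Ω.obj X).M (CoendT K V Ω)
      (Module.finBasis K (Ω.obj X).M i)) ∘ₗ coendK K V Ω X ∘ₗ
    (TensorProduct.mk K ((Ω.obj X).M →ₗ[K] K) (Ω.obj X).M
      ((Module.finBasis K (Ω.obj X).M).coord i))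

end Coend
section RbalOnly

variable {K : Type} [Field K] {V : Type} [Fintype V] [DecidableEq V]

/-- The balancing subspace of `M ⊗[K] N` defining `M ⊗_R N`. -/
noncomputable def rbal (M N : Bmd K V) : Submodule K (M.M ⊗[K] N.M) :=
  Submodule.span K {z | ∃ (l : V) (m : M.M) (n : N.M),
    z = (M.aR l m) ⊗ₜ[K] n - m ⊗ₜ[K] (N.aL l n)}


/-- The underlying vector space of `M ⊗_R N`. -/
noncomputable abbrev RTc (M N : Bmd K V) : Type := (M.M ⊗[K] N.M) ⧸ rbal M N

end RbalOnly
section MonDataSec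

open CategoryTheory MonoidalCategory

variable (K : Type) [Field K] (V : Type) [Fintype V] [DecidableEq V]
variable {C : Type} [SmallCategory C] [MonoidalCategory C] (Ω : C ⥤ Bmd K V)

/-- The data making `Ω : C ⥤ bmd(R)` a monoidal functor: natural isomorphisms
`(φ₂)_{X,Y} : Ω(X) ⊗_R Ω(Y) ≅ Ω(X ⊗ Y)` of `R`-bimodules and
`φ₀ : R ≅ Ω(𝟙)`, compatible with associativity and unit constraints. -/
structure MonData where
  phi2 : ∀ X Y : C, RTc (Ω.obj X) (Ω.obj Y) ≃ₗ[K] (Ω.obj (X ⊗ Y)).M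
  phi0 : (V → K) ≃ₗ[K] (Ω.obj (𝟙_ C)).M
  phi2_aL : ∀ (X Y : C) (l : V) (m : (Ω.obj X).M) (n : (Ω.obj Y).M),
    phi2 X Y ((rbal (Ω.obj X) (Ω.obj Y)).mkQ (((Ω.obj X).aL l m) ⊗ₜ[K] n)) =
      (Ω.obj (X ⊗ Y)).aL l (phi2 X Y ((rbal (Ω.obj X) (Ω.obj Y)).mkQ (m ⊗ₜ[K] n)))
  phi2_aR : ∀ (X Y : C) (l : V) (m : (Ω.obj X).M) (n : (Ω.obj Y).M),
    phi2 X Y ((rbal (Ω.obj X) (Ω.obj Y)).mkQ (m ⊗ₜ[K] ((Ω.obj Y).aR l n))) =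
      (Ω.obj (X ⊗ Y)).aR l (phi2 X Y ((rbal (Ω.obj X) (Ω.obj Y)).mkQ (m ⊗ₜ[K] n)))
  phi0_aL : ∀ (l : V) (r : V → K),
    phi0 (fun x => (Pi.single l 1 : V → K) x * r x) = (Ω.obj (𝟙_ C)).aL l (phi0 r)
  phi0_aR : ∀ (l : V) (r : V → K),
    phi0 (fun x => r x * (Pi.single l 1 : V → K) x) = (Ω.obj (𝟙_ C)).aR l (phi0 r)
  natural : ∀ {X X' Y Y' : C} (f : X ⟶ X') (g : Y ⟶ Y')
    (m : (Ω.obj X).M) (n : (Ω.obj Y).M),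
    (Ω.map (f ⊗ₘ g)).1 (phi2 X Y ((rbal (Ω.obj X) (Ω.obj Y)).mkQ (m ⊗ₜ[K] n))) =
      phi2 X' Y' ((rbal (Ω.obj X') (Ω.obj Y')).mkQ
        (((Ω.map f).1 m) ⊗ₜ[K] ((Ω.map g).1 n)))
  assoc : ∀ (X Y Z : C) (a : (Ω.obj X).M) (b : (Ω.obj Y).M) (c : (Ω.obj Z).M),
    (Ω.map (α_ X Y Z).hom).1
        (phi2 (X ⊗ Y) Z ((rbal (Ω.obj (X ⊗ Y)) (Ω.obj Z)).mkQ
          ((phi2 X Y ((rbal (Ω.obj X) (Ω.obj Y)).mkQ (a ⊗ₜ[K] b))) ⊗ₜ[K] c))) =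
      phi2 X (Y ⊗ Z) ((rbal (Ω.obj X) (Ω.obj (Y ⊗ Z))).mkQ
        (a ⊗ₜ[K] (phi2 Y Z ((rbal (Ω.obj Y) (Ω.obj Z)).mkQ (b ⊗ₜ[K] c)))))
  lunit : ∀ (X : C) (r : V → K) (m : (Ω.obj X).M),
    (Ω.map (λ_ X).hom).1 (phi2 (𝟙_ C) X ((rbal (Ω.obj (𝟙_ C)) (Ω.obj X)).mkQ
        ((phi0 r) ⊗ₜ[K] m))) = ∑ l : V, r l • (Ω.obj X).aL l m
  runit : ∀ (X : C) (r : V → K) (m : (Ω.obj X).M),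
    (Ω.map (ρ_ X).hom).1 (phi2 X (𝟙_ C) ((rbal (Ω.obj X) (Ω.obj (𝟙_ C))).mkQ
        (m ⊗ₜ[K] (phi0 r)))) = ∑ l : V, r l • (Ω.obj X).aR l m

/-- The characterising property of the multiplication
`m = C(⊗, φ₂) ∘ φ₂ : C(Ω) ⊗_E C(Ω) → C(Ω)`, in terms of the comodule
structures `δ`. -/
def CoendMulChar (MD : MonData K V Ω)
    (mul : CoendT K V Ω →ₗ[K] CoendT K V Ω →ₗ[K] CoendT K V Ω) : Prop :=
  ∀ (X Y : C) (a : (Ω.obj X).M) (b : (Ω.obj Y).M),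
    coendDelta K V Ω (X ⊗ Y)
        (MD.phi2 X Y ((rbal (Ω.obj X) (Ω.obj Y)).mkQ (a ⊗ₜ[K] b))) =
      (TensorProduct.map
          ((MD.phi2 X Y).toLinearMap ∘ₗ (rbal (Ω.obj X) (Ω.obj Y)).mkQ)
          (TensorProduct.lift mul))
        ((TensorProduct.tensorTensorTensorComm K (Ω.obj X).M (CoendT K V Ω)
            (Ω.obj Y).M (CoendT K V Ω))
          ((coendDelta K V Ω X a) ⊗ₜ[K] (coendDelta K V Ω Y b)))

/-- The characterising property of the unit `η = C(I, φ₀) : E → C(Ω)`. -/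
def CoendEtaChar (MD : MonData K V Ω) (η : (V × V → K) →ₗ[K] CoendT K V Ω) : Prop :=
  ∀ l : V,
    coendDelta K V Ω (𝟙_ C) (MD.phi0 (Pi.single l 1)) =
      ∑ mm : V, (MD.phi0 (Pi.single mm 1)) ⊗ₜ[K] (η (Pi.single (mm, l) 1))

end MonDataSec
section Aux
open CategoryTheory MonoidalCategory

variable {K : Type} [Field K] {V : Type} [Fintype V] [DecidableEq V]
variable {C : Type} [SmallCategory C] (Ω : C ⥤ Bmd K V)

lemma coendK_tmul (X : C) (g : (Ω.obj X).M →ₗ[K] K) (m : (Ω.obj X).M) :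
    coendK K V Ω X (g ⊗ₜ[K] m) =
      (coendRel K V Ω).mkQ (Finsupp.single ⟨X, g, m⟩ (1 : K)) := by
  simp [coendK]

lemma coendK_dinat {X Y : C} (f : X ⟶ Y) (g : (Ω.obj Y).M →ₗ[K] K) (m : (Ω.obj X).M) :
    coendK K V Ω X ((g ∘ₗ (Ω.map f).1) ⊗ₜ[K] m) =
      coendK K V Ω Y (g ⊗ₜ[K] (Ω.map f).1 m) := by
  rw [coendK_tmul, coendK_tmul, Submodule.mkQ_apply, Submodule.mkQ_apply,
    Submodule.Quotient.eq]
  exact Submodule.subset_span (Or.inr ⟨X, Y, f, g, m, rfl⟩)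

lemma coendK_span :
    Submodule.span K {x : CoendT K V Ω |
      ∃ (X : C) (g : (Ω.obj X).M →ₗ[K] K) (m : (Ω.obj X).M),
        x = coendK K V Ω X (g ⊗ₜ[K] m)} = ⊤ := by
  rw [Submodule.eq_top_iff']
  intro x
  obtain ⟨y, rfl⟩ := (coendRel K V Ω).mkQ_surjective x
  induction y using Finsupp.induction_linear with
  | zero => simp
  | add a b ha hb => rw [map_add]; exact Submodule.add_mem _ ha hb
  | single a c =>
    obtain ⟨X, g, m⟩ := a
    have h1 : (Finsupp.single (⟨X, (g, m)⟩ :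
        Σ X : C, ((Ω.obj X).M →ₗ[K] K) × (Ω.obj X).M) c) =
        c • Finsupp.single ⟨X, (g, m)⟩ (1 : K) := by
      rw [Finsupp.smul_single, smul_eq_mul, mul_one]
    rw [h1, map_smul]
    exact Submodule.smul_mem _ _
      (Submodule.subset_span ⟨X, g, m, (coendK_tmul Ω X g m).symm⟩)

lemma coend_ext1 {W : Type} [AddCommGroup W] [Module K W]
    {f g : CoendT K V Ω →ₗ[K] W}
    (h : ∀ (X : C) (φ : (Ω.obj X).M →ₗ[K] K) (m : (Ω.obj X).M),
      f (coendK K V Ω X (φ ⊗ₜ[K] m)) = g (coendK K V Ω X (φ ⊗ₜ[K] m))) : f = g := by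
  apply LinearMap.ext_on (coendK_span Ω)
  rintro x ⟨X, φ, m, rfl⟩
  exact h X φ m

lemma coend_ext2 {W : Type} [AddCommGroup W] [Module K W]
    {f g : CoendT K V Ω →ₗ[K] CoendT K V Ω →ₗ[K] W}
    (h : ∀ (X : C) (φ : (Ω.obj X).M →ₗ[K] K) (m : (Ω.obj X).M)
      (Y : C) (ψ : (Ω.obj Y).M →ₗ[K] K) (n : (Ω.obj Y).M),
      f (coendK K V Ω X (φ ⊗ₜ[K] m)) (coendK K V Ω Y (ψ ⊗ₜ[K] n)) =
      g (coendK K V Ω X (φ ⊗ₜ[K] m)) (coendK K V Ω Y (ψ ⊗ₜ[K] n))) : f = g :=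
  coend_ext1 Ω fun X φ m => coend_ext1 Ω fun Y ψ n => h X φ m Y ψ n

lemma coend_ext3 {W : Type} [AddCommGroup W] [Module K W]
    {f g : CoendT K V Ω →ₗ[K] CoendT K V Ω →ₗ[K] CoendT K V Ω →ₗ[K] W}
    (h : ∀ (X : C) (φ : (Ω.obj X).M →ₗ[K] K) (m : (Ω.obj X).M)
      (Y : C) (ψ : (Ω.obj Y).M →ₗ[K] K) (n : (Ω.obj Y).M)
      (Z : C) (χ : (Ω.obj Z).M →ₗ[K] K) (p : (Ω.obj Z).M),
      f (coendK K V Ω X (φ ⊗ₜ[K] m)) (coendK K V Ω Y (ψ ⊗ₜ[K] n))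
          (coendK K V Ω Z (χ ⊗ₜ[K] p)) =
      g (coendK K V Ω X (φ ⊗ₜ[K] m)) (coendK K V Ω Y (ψ ⊗ₜ[K] n))
          (coendK K V Ω Z (χ ⊗ₜ[K] p))) : f = g :=
  coend_ext1 Ω fun X φ m => coend_ext2 Ω fun Y ψ n Z χ p => h X φ m Y ψ n Z χ p

-- ### Bimodule action helpers

lemma aR_orth_apply (M : Bmd K V) (k l : V) (m : M.M) :
    M.aR k (M.aR l m) = if k = l then M.aR l m else 0 := by
  have := LinearMap.congr_fun (M.aR_orth k l) m
  rw [LinearMap.comp_apply] at this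
  rw [this]
  split_ifs with h
  · subst h; rfl
  · rfl

lemma aL_orth_apply (M : Bmd K V) (k l : V) (m : M.M) :
    M.aL k (M.aL l m) = if k = l then M.aL l m else 0 := by
  have := LinearMap.congr_fun (M.aL_orth k l) m
  rw [LinearMap.comp_apply] at this
  rw [this]
  split_ifs with h
  · subst h; rfl
  · rfl

lemma aLR_comm_apply (M : Bmd K V) (k l : V) (m : M.M) :
    M.aL k (M.aR l m) = M.aR l (M.aL k m) := by
  have := LinearMap.congr_fun (M.aLR_comm k l) m
  simpa using this

lemma sum_aR_apply (M : Bmd K V) (m : M.M) : ∑ l : V, M.aR l m = m := by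
  have := LinearMap.congr_fun M.sum_aR m
  simpa using this

lemma sum_aL_apply (M : Bmd K V) (m : M.M) : ∑ l : V, M.aL l m = m := by
  have := LinearMap.congr_fun M.sum_aL m
  simpa using this

lemma bmdMap_aR {M N : Bmd K V} (f : M ⟶ N) (l : V) (m : M.M) :
    f.1 (M.aR l m) = N.aR l (f.1 m) := by
  have := LinearMap.congr_fun (f.2.2 l) m
  simpa using this

lemma bmdMap_aL {M N : Bmd K V} (f : M ⟶ N) (l : V) (m : M.M) :
    f.1 (M.aL l m) = N.aL l (f.1 m) := by
  have := LinearMap.congr_fun (f.2.1 l) m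
  simpa using this

-- ### The canonical section of `M ⊗ N → M ⊗_R N`

noncomputable def eMap (M N : Bmd K V) : M.M ⊗[K] N.M →ₗ[K] M.M ⊗[K] N.M :=
  ∑ l : V, TensorProduct.map (M.aR l) (N.aL l)

lemma eMap_tmul (M N : Bmd K V) (m : M.M) (n : N.M) :
    eMap M N (m ⊗ₜ[K] n) = ∑ l : V, (M.aR l m) ⊗ₜ[K] (N.aL l n) := by
  simp [eMap]

lemma rbal_le_ker (M N : Bmd K V) : rbal M N ≤ LinearMap.ker (eMap M N) := by
  rw [rbal, Submodule.span_le]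
  rintro z ⟨l, m, n, rfl⟩
  simp only [SetLike.mem_coe, LinearMap.mem_ker, map_sub, eMap_tmul]
  have h1 : ∀ k : V, (M.aR k (M.aR l m)) ⊗ₜ[K] (N.aL k n) =
      if k = l then (M.aR l m) ⊗ₜ[K] (N.aL l n) else 0 := by
    intro k
    rw [aR_orth_apply]
    split_ifs with h
    · subst h; rfl
    · rw [TensorProduct.zero_tmul]
  have h2 : ∀ k : V, (M.aR k m) ⊗ₜ[K] (N.aL k (N.aL l n)) =
      if k = l then (M.aR l m) ⊗ₜ[K] (N.aL l n) else 0 := by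
    intro k
    rw [aL_orth_apply]
    split_ifs with h
    · subst h; rfl
    · rw [TensorProduct.tmul_zero]
  rw [Finset.sum_congr rfl (fun k _ => h1 k), Finset.sum_congr rfl (fun k _ => h2 k),
    sub_self]

noncomputable def secT (M N : Bmd K V) : RTc M N →ₗ[K] M.M ⊗[K] N.M :=
  Submodule.liftQ (rbal M N) (eMap M N) (rbal_le_ker M N)

lemma secT_mkQ (M N : Bmd K V) (z : M.M ⊗[K] N.M) :
    secT M N ((rbal M N).mkQ z) = eMap M N z := rfl

lemma mkQ_eMap (M N : Bmd K V) (z : M.M ⊗[K] N.M) :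
    (rbal M N).mkQ (eMap M N z) = (rbal M N).mkQ z := by
  induction z using TensorProduct.induction_on with
  | zero => simp
  | add x y hx hy => rw [map_add, map_add, map_add, hx, hy]
  | tmul m n =>
    rw [eMap_tmul, map_sum]
    have key : ∀ l : V, (rbal M N).mkQ ((M.aR l m) ⊗ₜ[K] (N.aL l n)) =
        (rbal M N).mkQ ((M.aR l m) ⊗ₜ[K] n) := by
      intro l
      rw [Submodule.mkQ_apply, Submodule.mkQ_apply, Submodule.Quotient.eq]
      have hmem : (M.aR l (M.aR l m)) ⊗ₜ[K] n - (M.aR l m) ⊗ₜ[K] (N.aL l n) ∈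
          rbal M N := Submodule.subset_span ⟨l, M.aR l m, n, rfl⟩
      rw [aR_orth_apply, if_pos rfl] at hmem
      have := Submodule.neg_mem _ hmem
      rwa [neg_sub] at this
    rw [Finset.sum_congr rfl (fun l _ => key l), ← map_sum, ← TensorProduct.sum_tmul,
      sum_aR_apply]

-- ### Pairing functionals

noncomputable def pairF {A B : Type} [AddCommGroup A] [Module K A]
    [AddCommGroup B] [Module K B] (g : A →ₗ[K] K) (h : B →ₗ[K] K) :
    A ⊗[K] B →ₗ[K] K :=
  TensorProduct.lift ((LinearMap.mul K K).compl₁₂ g h)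

@[simp] lemma pairF_tmul {A B : Type} [AddCommGroup A] [Module K A]
    [AddCommGroup B] [Module K B] (g : A →ₗ[K] K) (h : B →ₗ[K] K) (a : A) (b : B) :
    pairF g h (a ⊗ₜ[K] b) = g a * h b := by
  simp [pairF]

-- ### Dual-basis expansions

lemma dual_expand {M : Type} [AddCommGroup M] [Module K M] {ι : Type} [Fintype ι]
    (b : Module.Basis ι K M) (f : M →ₗ[K] K) : f = ∑ i, f (b i) • b.coord i := by
  classical
  refine b.ext fun j => ?_
  rw [LinearMap.sum_apply]
  have h : ∀ x, f (b x) * (b.repr (b j)) x = if j = x then f (b j) else 0 := by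
    intro x
    rw [Module.Basis.repr_self, Finsupp.single_apply]
    split_ifs with hx
    · subst hx; rw [mul_one]
    · rw [mul_zero]
  simp only [LinearMap.smul_apply, Module.Basis.coord_apply, smul_eq_mul]
  rw [Finset.sum_congr rfl fun x _ => h x, Finset.sum_ite_eq]
  simp

lemma basis_sum_coord {M : Type} [AddCommGroup M] [Module K M] {ι : Type} [Fintype ι]
    (b : Module.Basis ι K M) (x : M) : ∑ i, b.coord i x • b i = x := by
  simpa [Module.Basis.coord_apply] using b.sum_repr x

lemma dual_expansion {M W : Type} [AddCommGroup M] [Module K M]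
    [AddCommGroup W] [Module K W] {ι τ : Type} [Fintype ι] [Fintype τ]
    (b : Module.Basis ι K M) (v : τ → M) (f : τ → (M →ₗ[K] K))
    (hv : ∀ x : M, ∑ t, f t x • v t = x)
    (Φ : M →ₗ[K] (M →ₗ[K] K) →ₗ[K] W) :
    ∑ t, Φ (v t) (f t) = ∑ i, Φ (b i) (b.coord i) := by
  have step1 : ∀ t, Φ (v t) (f t) = ∑ i, f t (b i) • Φ (v t) (b.coord i) := by
    intro t
    conv_lhs => rw [dual_expand b (f t)]
    rw [map_sum]
    exact Finset.sum_congr rfl fun i _ => by rw [map_smul]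
  calc ∑ t, Φ (v t) (f t) = ∑ t, ∑ i, f t (b i) • Φ (v t) (b.coord i) :=
        Finset.sum_congr rfl fun t _ => step1 t
    _ = ∑ i, ∑ t, f t (b i) • Φ (v t) (b.coord i) := Finset.sum_comm
    _ = ∑ i, Φ (b i) (b.coord i) := by
        refine Finset.sum_congr rfl fun i _ => ?_
        have : ∑ t, f t (b i) • Φ (v t) (b.coord i) =
            Φ (∑ t, f t (b i) • v t) (b.coord i) := by
          rw [map_sum, LinearMap.sum_apply]
          exact Finset.sum_congr rfl fun t _ => by rw [map_smul, LinearMap.smul_apply]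
        rw [this, hv (b i)]

-- ### The comodule maps `coendDelta`

lemma coendDelta_apply (X : C) (m : (Ω.obj X).M) :
    coendDelta K V Ω X m = ∑ i, (Module.finBasis K (Ω.obj X).M i) ⊗ₜ[K]
      (coendK K V Ω X (((Module.finBasis K (Ω.obj X).M).coord i) ⊗ₜ[K] m)) := by
  rw [coendDelta, LinearMap.sum_apply]
  rfl

lemma coendDelta_basis (X : C) {ι : Type} [Fintype ι] (b : Module.Basis ι K (Ω.obj X).M)
    (m : (Ω.obj X).M) :
    coendDelta K V Ω X m =
      ∑ i, (b i) ⊗ₜ[K] (coendK K V Ω X ((b.coord i) ⊗ₜ[K] m)) := by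
  rw [coendDelta_apply]
  exact dual_expansion b _ _ (basis_sum_coord _)
    ((TensorProduct.mk K (Ω.obj X).M (CoendT K V Ω)).compl₂
      (coendK K V Ω X ∘ₗ ((TensorProduct.mk K ((Ω.obj X).M →ₗ[K] K) (Ω.obj X).M).flip m)))

lemma coendDelta_dinat (X Y : C) (f : X ⟶ Y) (m : (Ω.obj X).M) :
    coendDelta K V Ω Y ((Ω.map f).1 m) =
      (TensorProduct.map (Ω.map f).1 LinearMap.id) (coendDelta K V Ω X m) := by
  classical
  set b := Module.finBasis K (Ω.obj Y).M with hb
  set c := Module.finBasis K (Ω.obj X).M with hc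
  rw [coendDelta_apply, coendDelta_apply, map_sum, ← hb, ← hc]
  have hterm : ∀ i, (b i) ⊗ₜ[K] (coendK K V Ω Y ((b.coord i) ⊗ₜ[K] (Ω.map f).1 m)) =
      ∑ j, (b.coord i ((Ω.map f).1 (c j))) •
        ((b i) ⊗ₜ[K] (coendK K V Ω X ((c.coord j) ⊗ₜ[K] m))) := by
    intro i
    rw [← coendK_dinat]
    conv_lhs => rw [dual_expand c (b.coord i ∘ₗ (Ω.map f).1)]
    rw [TensorProduct.sum_tmul, map_sum, TensorProduct.tmul_sum]
    refine Finset.sum_congr rfl fun j _ => ?_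
    rw [← TensorProduct.smul_tmul', map_smul, TensorProduct.tmul_smul, LinearMap.comp_apply]
  rw [Finset.sum_congr rfl fun i _ => hterm i, Finset.sum_comm]
  refine Finset.sum_congr rfl fun j _ => ?_
  rw [TensorProduct.map_tmul, LinearMap.id_coe, id_eq]
  have : ∑ i, (b.coord i ((Ω.map f).1 (c j))) •
      ((b i) ⊗ₜ[K] (coendK K V Ω X ((c.coord j) ⊗ₜ[K] m))) =
      (∑ i, (b.coord i ((Ω.map f).1 (c j))) • b i) ⊗ₜ[K]
        (coendK K V Ω X ((c.coord j) ⊗ₜ[K] m)) := by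
    rw [TensorProduct.sum_tmul]
    exact Finset.sum_congr rfl fun i _ => by rw [TensorProduct.smul_tmul']
  rw [this, basis_sum_coord b]

-- ### The star functional

section Star

variable [MonoidalCategory C] (MD : MonData K V Ω)

noncomputable def phi2L (X Y : C) :
    (Ω.obj X).M ⊗[K] (Ω.obj Y).M →ₗ[K] (Ω.obj (X ⊗ Y)).M :=
  (MD.phi2 X Y).toLinearMap ∘ₗ (rbal (Ω.obj X) (Ω.obj Y)).mkQ

lemma phi2L_apply (X Y : C) (z : (Ω.obj X).M ⊗[K] (Ω.obj Y).M) :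
    phi2L Ω MD X Y z = MD.phi2 X Y ((rbal (Ω.obj X) (Ω.obj Y)).mkQ z) := rfl

lemma phi2L_surj (X Y : C) : Function.Surjective (phi2L Ω MD X Y) := by
  intro x
  obtain ⟨q, hq⟩ := (MD.phi2 X Y).surjective x
  obtain ⟨z, hz⟩ := (rbal (Ω.obj X) (Ω.obj Y)).mkQ_surjective q
  exact ⟨z, by rw [phi2L_apply, hz, hq]⟩

noncomputable def starF {X Y : C} (g : (Ω.obj X).M →ₗ[K] K)
    (h : (Ω.obj Y).M →ₗ[K] K) : (Ω.obj (X ⊗ Y)).M →ₗ[K] K :=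
  pairF g h ∘ₗ secT (Ω.obj X) (Ω.obj Y) ∘ₗ (MD.phi2 X Y).symm.toLinearMap

lemma starF_apply {X Y : C} (g : (Ω.obj X).M →ₗ[K] K) (h : (Ω.obj Y).M →ₗ[K] K)
    (m : (Ω.obj X).M) (n : (Ω.obj Y).M) :
    starF Ω MD g h (phi2L Ω MD X Y (m ⊗ₜ[K] n)) =
      ∑ l : V, g ((Ω.obj X).aR l m) * h ((Ω.obj Y).aL l n) := by
  rw [starF, phi2L_apply, LinearMap.comp_apply, LinearMap.comp_apply,
    LinearEquiv.coe_toLinearMap, LinearEquiv.symm_apply_apply, secT_mkQ, eMap_tmul,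
    map_sum]
  exact Finset.sum_congr rfl fun l _ => pairF_tmul _ _ _ _

lemma starF_ext {X Y : C} {F G : (Ω.obj (X ⊗ Y)).M →ₗ[K] K}
    (h : ∀ (m : (Ω.obj X).M) (n : (Ω.obj Y).M),
      F (phi2L Ω MD X Y (m ⊗ₜ[K] n)) = G (phi2L Ω MD X Y (m ⊗ₜ[K] n))) : F = G := by
  rw [← LinearMap.cancel_right (phi2L_surj Ω MD X Y)]
  exact TensorProduct.ext' h

lemma starF_add_left {X Y : C} (g g' : (Ω.obj X).M →ₗ[K] K)
    (h : (Ω.obj Y).M →ₗ[K] K) :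
    starF Ω MD (g + g') h = starF Ω MD g h + starF Ω MD g' h := by
  apply starF_ext Ω MD
  intro m n
  rw [LinearMap.add_apply, starF_apply, starF_apply, starF_apply, ← Finset.sum_add_distrib]
  exact Finset.sum_congr rfl fun l _ => by rw [LinearMap.add_apply, add_mul]

lemma starF_smul_left {X Y : C} (c : K) (g : (Ω.obj X).M →ₗ[K] K)
    (h : (Ω.obj Y).M →ₗ[K] K) :
    starF Ω MD (c • g) h = c • starF Ω MD g h := by
  apply starF_ext Ω MD
  intro m n
  rw [LinearMap.smul_apply, starF_apply, starF_apply, Finset.smul_sum]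
  exact Finset.sum_congr rfl fun l _ => by
    rw [LinearMap.smul_apply, smul_eq_mul, smul_eq_mul, mul_assoc]

lemma starF_add_right {X Y : C} (g : (Ω.obj X).M →ₗ[K] K)
    (h h' : (Ω.obj Y).M →ₗ[K] K) :
    starF Ω MD g (h + h') = starF Ω MD g h + starF Ω MD g h' := by
  apply starF_ext Ω MD
  intro m n
  rw [LinearMap.add_apply, starF_apply, starF_apply, starF_apply, ← Finset.sum_add_distrib]
  exact Finset.sum_congr rfl fun l _ => by rw [LinearMap.add_apply, mul_add]

lemma starF_smul_right {X Y : C} (c : K) (g : (Ω.obj X).M →ₗ[K] K)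
    (h : (Ω.obj Y).M →ₗ[K] K) :
    starF Ω MD g (c • h) = c • starF Ω MD g h := by
  apply starF_ext Ω MD
  intro m n
  rw [LinearMap.smul_apply, starF_apply, starF_apply, Finset.smul_sum]
  exact Finset.sum_congr rfl fun l _ => by
    rw [LinearMap.smul_apply, smul_eq_mul, smul_eq_mul, mul_left_comm]

lemma starF_dinat_left {X Y Z : C} (f : X ⟶ Y) (g : (Ω.obj Y).M →ₗ[K] K)
    (h : (Ω.obj Z).M →ₗ[K] K) :
    starF Ω MD (g ∘ₗ (Ω.map f).1) h =
      (starF Ω MD g h) ∘ₗ (Ω.map (f ⊗ₘ 𝟙 Z)).1 := by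
  apply starF_ext Ω MD
  intro m n
  have hnat : (Ω.map (f ⊗ₘ 𝟙 Z)).1 (phi2L Ω MD X Z (m ⊗ₜ[K] n)) =
      phi2L Ω MD Y Z (((Ω.map f).1 m) ⊗ₜ[K] n) := by
    rw [phi2L_apply, phi2L_apply, MD.natural f (𝟙 Z) m n, CategoryTheory.Functor.map_id,
      Bmd.id_coe, LinearMap.id_coe, id_eq]
  rw [LinearMap.comp_apply, hnat, starF_apply, starF_apply]
  exact Finset.sum_congr rfl fun l _ => by
    rw [LinearMap.comp_apply, bmdMap_aR]

lemma starF_dinat_right {X Y Z : C} (f : Y ⟶ Z) (g : (Ω.obj X).M →ₗ[K] K)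
    (h : (Ω.obj Z).M →ₗ[K] K) :
    starF Ω MD g (h ∘ₗ (Ω.map f).1) =
      (starF Ω MD g h) ∘ₗ (Ω.map (𝟙 X ⊗ₘ f)).1 := by
  apply starF_ext Ω MD
  intro m n
  have hnat : (Ω.map (𝟙 X ⊗ₘ f)).1 (phi2L Ω MD X Y (m ⊗ₜ[K] n)) =
      phi2L Ω MD X Z (m ⊗ₜ[K] ((Ω.map f).1 n)) := by
    rw [phi2L_apply, phi2L_apply, MD.natural (𝟙 X) f m n, CategoryTheory.Functor.map_id,
      Bmd.id_coe, LinearMap.id_coe, id_eq]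
  rw [LinearMap.comp_apply, hnat, starF_apply, starF_apply]
  exact Finset.sum_congr rfl fun l _ => by
    rw [LinearMap.comp_apply, bmdMap_aL]

lemma phi2L_aL (X Y : C) (l : V) (m : (Ω.obj X).M) (n : (Ω.obj Y).M) :
    phi2L Ω MD X Y (((Ω.obj X).aL l m) ⊗ₜ[K] n) =
      (Ω.obj (X ⊗ Y)).aL l (phi2L Ω MD X Y (m ⊗ₜ[K] n)) := by
  rw [phi2L_apply, phi2L_apply]; exact MD.phi2_aL X Y l m n

lemma phi2L_aR (X Y : C) (l : V) (m : (Ω.obj X).M) (n : (Ω.obj Y).M) :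
    phi2L Ω MD X Y (m ⊗ₜ[K] ((Ω.obj Y).aR l n)) =
      (Ω.obj (X ⊗ Y)).aR l (phi2L Ω MD X Y (m ⊗ₜ[K] n)) := by
  rw [phi2L_apply, phi2L_apply]; exact MD.phi2_aR X Y l m n

lemma phi2L_balance (X Y : C) (l : V) (m : (Ω.obj X).M) (n : (Ω.obj Y).M) :
    phi2L Ω MD X Y (((Ω.obj X).aR l m) ⊗ₜ[K] n) =
      phi2L Ω MD X Y (m ⊗ₜ[K] ((Ω.obj Y).aL l n)) := by
  rw [phi2L_apply, phi2L_apply]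
  congr 1
  rw [Submodule.mkQ_apply, Submodule.mkQ_apply, Submodule.Quotient.eq]
  exact Submodule.subset_span ⟨l, m, n, rfl⟩

-- ### The multiplication on the coend

lemma mapTensor_fst {X Y : C} (Z : C) (f : X ⟶ Y) (m : (Ω.obj X).M)
    (n : (Ω.obj Z).M) :
    (Ω.map (f ⊗ₘ 𝟙 Z)).1 (phi2L Ω MD X Z (m ⊗ₜ[K] n)) =
      phi2L Ω MD Y Z (((Ω.map f).1 m) ⊗ₜ[K] n) := by
  rw [phi2L_apply, phi2L_apply, MD.natural f (𝟙 Z) m n, CategoryTheory.Functor.map_id,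
    Bmd.id_coe, LinearMap.id_coe, id_eq]

lemma mapTensor_snd (X : C) {Y Z : C} (f : Y ⟶ Z) (m : (Ω.obj X).M)
    (n : (Ω.obj Y).M) :
    (Ω.map (𝟙 X ⊗ₘ f)).1 (phi2L Ω MD X Y (m ⊗ₜ[K] n)) =
      phi2L Ω MD X Z (m ⊗ₜ[K] ((Ω.map f).1 n)) := by
  rw [phi2L_apply, phi2L_apply, MD.natural (𝟙 X) f m n, CategoryTheory.Functor.map_id,
    Bmd.id_coe, LinearMap.id_coe, id_eq]

noncomputable def mulVal (t u : Σ X : C, ((Ω.obj X).M →ₗ[K] K) × (Ω.obj X).M) :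
    CoendT K V Ω :=
  coendK K V Ω (t.1 ⊗ u.1)
    ((starF Ω MD t.2.1 u.2.1) ⊗ₜ[K] (phi2L Ω MD t.1 u.1 (t.2.2 ⊗ₜ[K] u.2.2)))

lemma mulVal_add_fun_left (X : C) (g g' : (Ω.obj X).M →ₗ[K] K) (m : (Ω.obj X).M)
    (u : Σ X : C, ((Ω.obj X).M →ₗ[K] K) × (Ω.obj X).M) :
    mulVal Ω MD ⟨X, g + g', m⟩ u = mulVal Ω MD ⟨X, g, m⟩ u + mulVal Ω MD ⟨X, g', m⟩ u := by
  rw [mulVal, mulVal, mulVal]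
  dsimp only
  rw [starF_add_left, TensorProduct.add_tmul, map_add]

lemma mulVal_smul_fun_left (X : C) (c : K) (g : (Ω.obj X).M →ₗ[K] K) (m : (Ω.obj X).M)
    (u : Σ X : C, ((Ω.obj X).M →ₗ[K] K) × (Ω.obj X).M) :
    mulVal Ω MD ⟨X, c • g, m⟩ u = c • mulVal Ω MD ⟨X, g, m⟩ u := by
  rw [mulVal, mulVal]
  dsimp only
  rw [starF_smul_left, ← TensorProduct.smul_tmul', map_smul]

lemma mulVal_add_vec_left (X : C) (g : (Ω.obj X).M →ₗ[K] K) (m m' : (Ω.obj X).M)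
    (u : Σ X : C, ((Ω.obj X).M →ₗ[K] K) × (Ω.obj X).M) :
    mulVal Ω MD ⟨X, g, m + m'⟩ u = mulVal Ω MD ⟨X, g, m⟩ u + mulVal Ω MD ⟨X, g, m'⟩ u := by
  rw [mulVal, mulVal, mulVal]
  dsimp only
  rw [TensorProduct.add_tmul, map_add, TensorProduct.tmul_add, map_add]

lemma mulVal_smul_vec_left (X : C) (c : K) (g : (Ω.obj X).M →ₗ[K] K) (m : (Ω.obj X).M)
    (u : Σ X : C, ((Ω.obj X).M →ₗ[K] K) × (Ω.obj X).M) :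
    mulVal Ω MD ⟨X, g, c • m⟩ u = c • mulVal Ω MD ⟨X, g, m⟩ u := by
  rw [mulVal, mulVal]
  dsimp only
  rw [← TensorProduct.smul_tmul', map_smul, TensorProduct.tmul_smul, map_smul]

lemma mulVal_dinat_left (X Y : C) (f : X ⟶ Y) (g : (Ω.obj Y).M →ₗ[K] K)
    (m : (Ω.obj X).M) (u : Σ X : C, ((Ω.obj X).M →ₗ[K] K) × (Ω.obj X).M) :
    mulVal Ω MD ⟨X, g ∘ₗ (Ω.map f).1, m⟩ u = mulVal Ω MD ⟨Y, g, (Ω.map f).1 m⟩ u := by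
  obtain ⟨Z, h, n⟩ := u
  rw [mulVal, mulVal]
  dsimp only
  rw [starF_dinat_left, coendK_dinat, mapTensor_fst]

lemma mulVal_add_fun_right (Y : C) (h h' : (Ω.obj Y).M →ₗ[K] K) (n : (Ω.obj Y).M)
    (t : Σ X : C, ((Ω.obj X).M →ₗ[K] K) × (Ω.obj X).M) :
    mulVal Ω MD t ⟨Y, h + h', n⟩ = mulVal Ω MD t ⟨Y, h, n⟩ + mulVal Ω MD t ⟨Y, h', n⟩ := by
  rw [mulVal, mulVal, mulVal]
  dsimp only
  rw [starF_add_right, TensorProduct.add_tmul, map_add]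

lemma mulVal_smul_fun_right (Y : C) (c : K) (h : (Ω.obj Y).M →ₗ[K] K) (n : (Ω.obj Y).M)
    (t : Σ X : C, ((Ω.obj X).M →ₗ[K] K) × (Ω.obj X).M) :
    mulVal Ω MD t ⟨Y, c • h, n⟩ = c • mulVal Ω MD t ⟨Y, h, n⟩ := by
  rw [mulVal, mulVal]
  dsimp only
  rw [starF_smul_right, ← TensorProduct.smul_tmul', map_smul]

lemma mulVal_add_vec_right (Y : C) (h : (Ω.obj Y).M →ₗ[K] K) (n n' : (Ω.obj Y).M)
    (t : Σ X : C, ((Ω.obj X).M →ₗ[K] K) × (Ω.obj X).M) :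
    mulVal Ω MD t ⟨Y, h, n + n'⟩ = mulVal Ω MD t ⟨Y, h, n⟩ + mulVal Ω MD t ⟨Y, h, n'⟩ := by
  rw [mulVal, mulVal, mulVal]
  dsimp only
  rw [TensorProduct.tmul_add, map_add, TensorProduct.tmul_add, map_add]

lemma mulVal_smul_vec_right (Y : C) (c : K) (h : (Ω.obj Y).M →ₗ[K] K) (n : (Ω.obj Y).M)
    (t : Σ X : C, ((Ω.obj X).M →ₗ[K] K) × (Ω.obj X).M) :
    mulVal Ω MD t ⟨Y, h, c • n⟩ = c • mulVal Ω MD t ⟨Y, h, n⟩ := by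
  rw [mulVal, mulVal]
  dsimp only
  rw [TensorProduct.tmul_smul, map_smul, TensorProduct.tmul_smul, map_smul]

lemma mulVal_dinat_right (Y Z : C) (f : Y ⟶ Z) (h : (Ω.obj Z).M →ₗ[K] K)
    (n : (Ω.obj Y).M) (t : Σ X : C, ((Ω.obj X).M →ₗ[K] K) × (Ω.obj X).M) :
    mulVal Ω MD t ⟨Y, h ∘ₗ (Ω.map f).1, n⟩ = mulVal Ω MD t ⟨Z, h, (Ω.map f).1 n⟩ := by
  obtain ⟨X, g, m⟩ := t
  rw [mulVal, mulVal]
  dsimp only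
  rw [starF_dinat_right, coendK_dinat, mapTensor_snd]

noncomputable def mulPre : PreCoend K V Ω →ₗ[K] PreCoend K V Ω →ₗ[K] CoendT K V Ω :=
  Finsupp.linearCombination K fun t =>
    Finsupp.linearCombination K fun u => mulVal Ω MD t u

lemma mulPre_single (t u : Σ X : C, ((Ω.obj X).M →ₗ[K] K) × (Ω.obj X).M) (c d : K) :
    mulPre Ω MD (Finsupp.single t c) (Finsupp.single u d) = c • d • mulVal Ω MD t u := by
  rw [mulPre, Finsupp.linearCombination_single, LinearMap.smul_apply,
    Finsupp.linearCombination_single]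

lemma mulPre_ker_left : ∀ z ∈ coendRel K V Ω, mulPre Ω MD z = 0 := by
  intro z hz
  rw [coendRel] at hz
  induction hz using Submodule.span_induction with
  | zero => exact map_zero _
  | add x y _ _ hx hy => rw [map_add, hx, hy, add_zero]
  | smul c x _ hx => rw [map_smul, hx, smul_zero]
  | mem x hx =>
    apply Finsupp.lhom_ext
    intro u d
    rw [LinearMap.zero_apply]
    rcases hx with ((((⟨X, g, g', m, rfl⟩ | ⟨X, c, g, m, rfl⟩) | ⟨X, g, m, m', rfl⟩) |
        ⟨X, c, g, m, rfl⟩) | ⟨X, Y, f, g, m, rfl⟩)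
    · rw [map_sub, map_sub, LinearMap.sub_apply, LinearMap.sub_apply,
        mulPre_single, mulPre_single, mulPre_single, mulVal_add_fun_left]
      simp [smul_add]
    · rw [map_sub, map_smul, LinearMap.sub_apply, LinearMap.smul_apply,
        mulPre_single, mulPre_single, mulVal_smul_fun_left, one_smul, one_smul,
        smul_comm d c, sub_self]
    · rw [map_sub, map_sub, LinearMap.sub_apply, LinearMap.sub_apply,
        mulPre_single, mulPre_single, mulPre_single, mulVal_add_vec_left]
      simp [smul_add]
    · rw [map_sub, map_smul, LinearMap.sub_apply, LinearMap.smul_apply,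
        mulPre_single, mulPre_single, mulVal_smul_vec_left, one_smul, one_smul,
        smul_comm d c, sub_self]
    · rw [map_sub, LinearMap.sub_apply, mulPre_single, mulPre_single,
        mulVal_dinat_left]
      simp

noncomputable def mulQ1 : CoendT K V Ω →ₗ[K] PreCoend K V Ω →ₗ[K] CoendT K V Ω :=
  Submodule.liftQ _ (mulPre Ω MD) fun z hz => mulPre_ker_left Ω MD z hz

lemma mulQ1_ker_right : ∀ z ∈ coendRel K V Ω, (mulQ1 Ω MD).flip z = 0 := by
  intro z hz
  apply LinearMap.ext_on (coendK_span Ω)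
  rintro x ⟨X, g, m, rfl⟩
  rw [LinearMap.zero_apply, LinearMap.flip_apply, coendK_tmul]
  rw [show (mulQ1 Ω MD) ((coendRel K V Ω).mkQ (Finsupp.single ⟨X, g, m⟩ (1:K))) z =
    mulPre Ω MD (Finsupp.single ⟨X, g, m⟩ (1:K)) z from rfl]
  rw [coendRel] at hz
  induction hz using Submodule.span_induction with
  | zero => exact map_zero _
  | add x y _ _ hx hy => rw [map_add, hx, hy, add_zero]
  | smul c x _ hx => rw [map_smul, hx, smul_zero]
  | mem x hx =>
    rcases hx with ((((⟨Y, h, h', n, rfl⟩ | ⟨Y, c, h, n, rfl⟩) | ⟨Y, h, n, n', rfl⟩) |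
        ⟨Y, c, h, n, rfl⟩) | ⟨Y, Z, f, h, n, rfl⟩)
    · rw [map_sub, map_sub, mulPre_single, mulPre_single, mulPre_single,
        mulVal_add_fun_right]
      simp [smul_add]
    · rw [map_sub, map_smul, mulPre_single, mulPre_single, mulVal_smul_fun_right,
        one_smul, one_smul, one_smul, one_smul, sub_self]
    · rw [map_sub, map_sub, mulPre_single, mulPre_single, mulPre_single,
        mulVal_add_vec_right]
      simp [smul_add]
    · rw [map_sub, map_smul, mulPre_single, mulPre_single, mulVal_smul_vec_right,
        one_smul, one_smul, one_smul, one_smul, sub_self]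
    · rw [map_sub, mulPre_single, mulPre_single, mulVal_dinat_right]
      simp

noncomputable def cmul : CoendT K V Ω →ₗ[K] CoendT K V Ω →ₗ[K] CoendT K V Ω :=
  (Submodule.liftQ _ (mulQ1 Ω MD).flip fun z hz => mulQ1_ker_right Ω MD z hz).flip

lemma cmul_apply (X Y : C) (g : (Ω.obj X).M →ₗ[K] K) (m : (Ω.obj X).M)
    (h : (Ω.obj Y).M →ₗ[K] K) (n : (Ω.obj Y).M) :
    cmul Ω MD (coendK K V Ω X (g ⊗ₜ[K] m)) (coendK K V Ω Y (h ⊗ₜ[K] n)) =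
      coendK K V Ω (X ⊗ Y)
        ((starF Ω MD g h) ⊗ₜ[K] (phi2L Ω MD X Y (m ⊗ₜ[K] n))) := by
  rw [coendK_tmul, coendK_tmul]
  have : cmul Ω MD ((coendRel K V Ω).mkQ (Finsupp.single ⟨X, g, m⟩ (1:K)))
      ((coendRel K V Ω).mkQ (Finsupp.single ⟨Y, h, n⟩ (1:K))) =
      mulPre Ω MD (Finsupp.single ⟨X, g, m⟩ (1:K)) (Finsupp.single ⟨Y, h, n⟩ (1:K)) := rfl
  rw [this, mulPre_single, one_smul, one_smul, mulVal]

-- ### Tensor coordinate expansion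

lemma tensor_sum_coord {M N : Type} [AddCommGroup M] [Module K M]
    [AddCommGroup N] [Module K N] {ι ι' : Type} [Fintype ι] [Fintype ι']
    (b : Module.Basis ι K M) (c : Module.Basis ι' K N) (w : M ⊗[K] N) :
    ∑ t : ι × ι', (pairF (b.coord t.1) (c.coord t.2)) w • (b t.1 ⊗ₜ[K] c t.2) = w := by
  induction w using TensorProduct.induction_on with
  | zero => simp
  | add x y hx hy =>
    have hstep : ∀ t : ι × ι',
        (pairF (b.coord t.1) (c.coord t.2)) (x + y) • (b t.1 ⊗ₜ[K] c t.2) =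
        (pairF (b.coord t.1) (c.coord t.2)) x • (b t.1 ⊗ₜ[K] c t.2) +
        (pairF (b.coord t.1) (c.coord t.2)) y • (b t.1 ⊗ₜ[K] c t.2) := fun t => by
      rw [map_add, add_smul]
    rw [Finset.sum_congr rfl fun t _ => hstep t, Finset.sum_add_distrib, hx, hy]
  | tmul m n =>
    rw [Fintype.sum_prod_type]
    have inner : ∀ i, ∑ j, (pairF (b.coord i) (c.coord j)) (m ⊗ₜ[K] n) • (b i ⊗ₜ[K] c j) =
        (b.coord i m • b i) ⊗ₜ[K] n := by
      intro i
      have hterm : ∀ j, (pairF (b.coord i) (c.coord j)) (m ⊗ₜ[K] n) • (b i ⊗ₜ[K] c j) =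
          (b.coord i m • b i) ⊗ₜ[K] (c.coord j n • c j) := by
        intro j
        rw [pairF_tmul, mul_smul, ← TensorProduct.tmul_smul, TensorProduct.smul_tmul']
      rw [Finset.sum_congr rfl fun j _ => hterm j, ← TensorProduct.tmul_sum,
        basis_sum_coord c n]
    rw [Finset.sum_congr rfl fun i _ => inner i, ← TensorProduct.sum_tmul,
      basis_sum_coord b m]

lemma starF_phi2L {X Y : C} (g : (Ω.obj X).M →ₗ[K] K) (h : (Ω.obj Y).M →ₗ[K] K)
    (z : (Ω.obj X).M ⊗[K] (Ω.obj Y).M) :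
    starF Ω MD g h (phi2L Ω MD X Y z) = pairF g h (eMap (Ω.obj X) (Ω.obj Y) z) := by
  rw [starF, phi2L_apply, LinearMap.comp_apply, LinearMap.comp_apply,
    LinearEquiv.coe_toLinearMap, LinearEquiv.symm_apply_apply, secT_mkQ]

lemma phi2L_eMap (X Y : C) (z : (Ω.obj X).M ⊗[K] (Ω.obj Y).M) :
    phi2L Ω MD X Y (eMap (Ω.obj X) (Ω.obj Y) z) = phi2L Ω MD X Y z := by
  rw [phi2L_apply, phi2L_apply, mkQ_eMap]

lemma star_sum_coord (X Y : C) {ι ι' : Type} [Fintype ι] [Fintype ι']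
    (b : Module.Basis ι K (Ω.obj X).M) (c : Module.Basis ι' K (Ω.obj Y).M)
    (x : (Ω.obj (X ⊗ Y)).M) :
    ∑ t : ι × ι', (starF Ω MD (b.coord t.1) (c.coord t.2)) x •
      phi2L Ω MD X Y ((b t.1) ⊗ₜ[K] (c t.2)) = x := by
  obtain ⟨z, rfl⟩ := phi2L_surj Ω MD X Y x
  have hval : ∀ t : ι × ι',
      (starF Ω MD (b.coord t.1) (c.coord t.2)) (phi2L Ω MD X Y z) =
      (pairF (b.coord t.1) (c.coord t.2)) (eMap (Ω.obj X) (Ω.obj Y) z) :=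
    fun t => starF_phi2L Ω MD _ _ z
  rw [Finset.sum_congr rfl fun t _ => by rw [hval t]]
  rw [show ∑ t : ι × ι',
      (pairF (b.coord t.1) (c.coord t.2)) (eMap (Ω.obj X) (Ω.obj Y) z) •
      phi2L Ω MD X Y ((b t.1) ⊗ₜ[K] (c t.2)) =
      phi2L Ω MD X Y (∑ t : ι × ι',
        (pairF (b.coord t.1) (c.coord t.2)) (eMap (Ω.obj X) (Ω.obj Y) z) •
        ((b t.1) ⊗ₜ[K] (c t.2)))
      from by rw [map_sum]; exact Finset.sum_congr rfl fun t _ => by rw [map_smul]]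
  rw [tensor_sum_coord, phi2L_eMap]

-- ### The unit basis of `Ω(𝟙)`

noncomputable def uB : Module.Basis V K (Ω.obj (𝟙_ C)).M := (Pi.basisFun K V).map MD.phi0

lemma uB_apply (l : V) : uB Ω MD l = MD.phi0 (Pi.single l 1) := by
  rw [uB, Module.Basis.map_apply, Pi.basisFun_apply]

lemma uB_coord_phi0 (l : V) (r : V → K) : (uB Ω MD).coord l (MD.phi0 r) = r l := by
  simp [uB, Module.Basis.coord_apply, Module.Basis.map_repr]

lemma uB_coord_uB (l m : V) :
    (uB Ω MD).coord l (uB Ω MD m) = if l = m then 1 else 0 := by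
  rw [uB_apply, uB_coord_phi0, Pi.single_apply]

lemma aL_phi0 (k : V) (r : V → K) :
    (Ω.obj (𝟙_ C)).aL k (MD.phi0 r) = r k • uB Ω MD k := by
  rw [← MD.phi0_aL k r]
  have h1 : (fun x => (Pi.single k 1 : V → K) x * r x) = Pi.single k (r k) := by
    funext x
    rw [Pi.single_apply, Pi.single_apply]
    split_ifs with hx
    · subst hx; rw [one_mul]
    · rw [zero_mul]
  have h2 : (Pi.single k (r k) : V → K) = r k • (Pi.single k 1 : V → K) := by
    funext x
    rw [Pi.single_apply, Pi.smul_apply, Pi.single_apply, smul_eq_mul]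
    split_ifs
    · rw [mul_one]
    · rw [mul_zero]
  rw [h1, h2, map_smul, uB_apply]

lemma aR_phi0 (k : V) (r : V → K) :
    (Ω.obj (𝟙_ C)).aR k (MD.phi0 r) = r k • uB Ω MD k := by
  rw [← MD.phi0_aR k r]
  have h1 : (fun x => r x * (Pi.single k 1 : V → K) x) = Pi.single k (r k) := by
    funext x
    rw [Pi.single_apply, Pi.single_apply]
    split_ifs with hx
    · subst hx; rw [mul_one]
    · rw [mul_zero]
  have h2 : (Pi.single k (r k) : V → K) = r k • (Pi.single k 1 : V → K) := by
    funext x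
    rw [Pi.single_apply, Pi.smul_apply, Pi.single_apply, smul_eq_mul]
    split_ifs
    · rw [mul_one]
    · rw [mul_zero]
  rw [h1, h2, map_smul, uB_apply]

lemma aL_uB (k m : V) :
    (Ω.obj (𝟙_ C)).aL k (uB Ω MD m) = if k = m then uB Ω MD m else 0 := by
  rw [uB_apply, aL_phi0, Pi.single_apply, uB_apply]
  split_ifs with h
  · rw [one_smul]; subst h; rfl
  · rw [zero_smul]

lemma aR_uB (k m : V) :
    (Ω.obj (𝟙_ C)).aR k (uB Ω MD m) = if k = m then uB Ω MD m else 0 := by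
  rw [uB_apply, aR_phi0, Pi.single_apply, uB_apply]
  split_ifs with h
  · rw [one_smul]; subst h; rfl
  · rw [zero_smul]

-- ### The unit of the coend

noncomputable def etaL : (V × V → K) →ₗ[K] CoendT K V Ω :=
  (Pi.basisFun K (V × V)).constr K fun q =>
    coendK K V Ω (𝟙_ C) (((uB Ω MD).coord q.1) ⊗ₜ[K] (uB Ω MD q.2))

lemma etaL_single (q : V × V) :
    etaL Ω MD (Pi.single q 1) =
      coendK K V Ω (𝟙_ C) (((uB Ω MD).coord q.1) ⊗ₜ[K] (uB Ω MD q.2)) := by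
  rw [etaL, ← Pi.basisFun_apply, Module.Basis.constr_basis]

lemma one_eq_sum_single : (1 : V × V → K) = ∑ q : V × V, Pi.single q 1 := by
  have := Finset.univ_sum_single (1 : V × V → K)
  simp only [Pi.one_apply] at this
  exact this.symm

lemma etaL_one : etaL Ω MD 1 = ∑ q : V × V, etaL Ω MD (Pi.single q 1) := by
  rw [one_eq_sum_single, map_sum]

-- ### Functional identities for `starF`

lemma starF_balance {X Y : C} (k : V) (g : (Ω.obj X).M →ₗ[K] K)
    (h : (Ω.obj Y).M →ₗ[K] K) :
    starF Ω MD (g ∘ₗ (Ω.obj X).aR k) h = starF Ω MD g (h ∘ₗ (Ω.obj Y).aL k) := by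
  classical
  apply starF_ext Ω MD
  intro m n
  rw [starF_apply, starF_apply]
  have h1 : ∀ j, (g ∘ₗ (Ω.obj X).aR k) ((Ω.obj X).aR j m) * h ((Ω.obj Y).aL j n) =
      if k = j then g ((Ω.obj X).aR j m) * h ((Ω.obj Y).aL j n) else 0 := by
    intro j
    rw [LinearMap.comp_apply, aR_orth_apply]
    split_ifs with hj
    · rfl
    · rw [map_zero, zero_mul]
  have h2 : ∀ j, g ((Ω.obj X).aR j m) * (h ∘ₗ (Ω.obj Y).aL k) ((Ω.obj Y).aL j n) =
      if k = j then g ((Ω.obj X).aR j m) * h ((Ω.obj Y).aL j n) else 0 := by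
    intro j
    rw [LinearMap.comp_apply, aL_orth_apply]
    split_ifs with hj
    · rfl
    · rw [map_zero, mul_zero]
  rw [Finset.sum_congr rfl fun j _ => h1 j, Finset.sum_congr rfl fun j _ => h2 j]

lemma starF_aL {X Y : C} (k : V) (g : (Ω.obj X).M →ₗ[K] K)
    (h : (Ω.obj Y).M →ₗ[K] K) :
    starF Ω MD (g ∘ₗ (Ω.obj X).aL k) h =
      (starF Ω MD g h) ∘ₗ (Ω.obj (X ⊗ Y)).aL k := by
  apply starF_ext Ω MD
  intro m n
  rw [LinearMap.comp_apply, ← phi2L_aL, starF_apply, starF_apply]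
  refine Finset.sum_congr rfl fun j _ => ?_
  rw [LinearMap.comp_apply, aLR_comm_apply]

lemma starF_aR {X Y : C} (k : V) (g : (Ω.obj X).M →ₗ[K] K)
    (h : (Ω.obj Y).M →ₗ[K] K) :
    starF Ω MD g (h ∘ₗ (Ω.obj Y).aR k) =
      (starF Ω MD g h) ∘ₗ (Ω.obj (X ⊗ Y)).aR k := by
  apply starF_ext Ω MD
  intro m n
  rw [LinearMap.comp_apply, ← phi2L_aR, starF_apply, starF_apply]
  refine Finset.sum_congr rfl fun j _ => ?_
  rw [LinearMap.comp_apply, ← aLR_comm_apply]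

lemma phi2L_assoc (X Y Z : C) (m : (Ω.obj X).M) (n : (Ω.obj Y).M) (p : (Ω.obj Z).M) :
    (Ω.map (α_ X Y Z).hom).1
        (phi2L Ω MD (X ⊗ Y) Z ((phi2L Ω MD X Y (m ⊗ₜ[K] n)) ⊗ₜ[K] p)) =
      phi2L Ω MD X (Y ⊗ Z) (m ⊗ₜ[K] (phi2L Ω MD Y Z (n ⊗ₜ[K] p))) := by
  rw [phi2L_apply, phi2L_apply, phi2L_apply, phi2L_apply]
  exact MD.assoc X Y Z m n p

lemma starF_assoc (X Y Z : C) (g : (Ω.obj X).M →ₗ[K] K) (h : (Ω.obj Y).M →ₗ[K] K)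
    (k : (Ω.obj Z).M →ₗ[K] K) :
    starF Ω MD (starF Ω MD g h) k =
      (starF Ω MD g (starF Ω MD h k)) ∘ₗ (Ω.map (α_ X Y Z).hom).1 := by
  apply starF_ext Ω MD
  intro u p
  obtain ⟨z, rfl⟩ := phi2L_surj Ω MD X Y u
  induction z using TensorProduct.induction_on with
  | zero => rw [map_zero, TensorProduct.zero_tmul, map_zero, map_zero, map_zero]
  | add x y hx hy =>
    rw [map_add, TensorProduct.add_tmul, map_add, map_add, hx, hy, map_add]
  | tmul m n =>
    rw [starF_apply, LinearMap.comp_apply, phi2L_assoc, starF_apply]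
    have hL : ∀ l, (starF Ω MD g h) ((Ω.obj (X ⊗ Y)).aR l (phi2L Ω MD X Y (m ⊗ₜ[K] n)))
        * k ((Ω.obj Z).aL l p) =
        ∑ j, g ((Ω.obj X).aR j m) * ((Ω.obj Y).aL j ((Ω.obj Y).aR l n) |> h)
          * k ((Ω.obj Z).aL l p) := by
      intro l
      rw [← phi2L_aR, starF_apply, Finset.sum_mul]
    have hR : ∀ j, g ((Ω.obj X).aR j m) *
        (starF Ω MD h k) ((Ω.obj (Y ⊗ Z)).aL j (phi2L Ω MD Y Z (n ⊗ₜ[K] p))) =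
        ∑ l, g ((Ω.obj X).aR j m) * (h ((Ω.obj Y).aR l ((Ω.obj Y).aL j n))
          * k ((Ω.obj Z).aL l p)) := by
      intro j
      rw [← phi2L_aL, starF_apply, Finset.mul_sum]
    rw [Finset.sum_congr rfl fun l _ => hL l, Finset.sum_congr rfl fun j _ => hR j,
      Finset.sum_comm]
    refine Finset.sum_congr rfl fun l _ => Finset.sum_congr rfl fun j _ => ?_
    rw [aLR_comm_apply, mul_assoc]

-- ### Unit identities

lemma omega_inv_hom {X Y : C} (e : X ≅ Y) (x : (Ω.obj X).M) :
    (Ω.map e.inv).1 ((Ω.map e.hom).1 x) = x := by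
  have h : Ω.map e.hom ≫ Ω.map e.inv = 𝟙 (Ω.obj X) := by
    rw [← Ω.map_comp, e.hom_inv_id, Ω.map_id]
  have h2 : (Ω.map e.inv).1 ∘ₗ (Ω.map e.hom).1 = LinearMap.id := congrArg Subtype.val h
  exact LinearMap.congr_fun h2 x

lemma omega_hom_inv {X Y : C} (e : X ≅ Y) (y : (Ω.obj Y).M) :
    (Ω.map e.hom).1 ((Ω.map e.inv).1 y) = y := by
  have h : Ω.map e.inv ≫ Ω.map e.hom = 𝟙 (Ω.obj Y) := by
    rw [← Ω.map_comp, e.inv_hom_id, Ω.map_id]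
  have h2 : (Ω.map e.hom).1 ∘ₗ (Ω.map e.inv).1 = LinearMap.id := congrArg Subtype.val h
  exact LinearMap.congr_fun h2 y

lemma phi2L_lunit (X : C) (r : V → K) (n : (Ω.obj X).M) :
    (Ω.map (λ_ X).hom).1 (phi2L Ω MD (𝟙_ C) X ((MD.phi0 r) ⊗ₜ[K] n)) =
      ∑ l : V, r l • (Ω.obj X).aL l n := by
  rw [phi2L_apply]
  exact MD.lunit X r n

lemma phi2L_runit (X : C) (r : V → K) (n : (Ω.obj X).M) :
    (Ω.map (ρ_ X).hom).1 (phi2L Ω MD X (𝟙_ C) (n ⊗ₜ[K] (MD.phi0 r))) =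
      ∑ l : V, r l • (Ω.obj X).aR l n := by
  rw [phi2L_apply]
  exact MD.runit X r n

lemma starF_sum_lunit (X : C) (g : (Ω.obj X).M →ₗ[K] K) :
    ∑ l : V, starF Ω MD ((uB Ω MD).coord l) g = g ∘ₗ (Ω.map (λ_ X).hom).1 := by
  classical
  have hext : ∀ (F G : (Ω.obj ((𝟙_ C) ⊗ X)).M →ₗ[K] K),
      (∀ w n, F (phi2L Ω MD (𝟙_ C) X (w ⊗ₜ[K] n)) =
        G (phi2L Ω MD (𝟙_ C) X (w ⊗ₜ[K] n))) → F = G := fun F G h =>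
    starF_ext Ω MD h
  apply hext
  intro w n
  obtain ⟨r, rfl⟩ := MD.phi0.surjective w
  rw [LinearMap.sum_apply, LinearMap.comp_apply, phi2L_lunit, map_sum]
  have hterm : ∀ l, starF Ω MD ((uB Ω MD).coord l) g
      (phi2L Ω MD (𝟙_ C) X ((MD.phi0 r) ⊗ₜ[K] n)) = r l • g ((Ω.obj X).aL l n) := by
    intro l
    rw [starF_apply]
    have h1 : ∀ j, (uB Ω MD).coord l ((Ω.obj (𝟙_ C)).aR j (MD.phi0 r)) *
        g ((Ω.obj X).aL j n) =
        if l = j then r j * g ((Ω.obj X).aL j n) else 0 := by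
      intro j
      rw [aR_phi0, map_smul, uB_coord_uB, smul_eq_mul]
      split_ifs with hj
      · rw [mul_one]
      · rw [mul_zero, zero_mul]
    rw [Finset.sum_congr rfl fun j _ => h1 j, Finset.sum_ite_eq, if_pos (Finset.mem_univ l),
      smul_eq_mul]
  rw [Finset.sum_congr rfl fun l _ => hterm l]
  exact Finset.sum_congr rfl fun l _ => by rw [map_smul]

lemma starF_sum_runit (X : C) (g : (Ω.obj X).M →ₗ[K] K) :
    ∑ l : V, starF Ω MD g ((uB Ω MD).coord l) = g ∘ₗ (Ω.map (ρ_ X).hom).1 := by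
  classical
  have hext : ∀ (F G : (Ω.obj (X ⊗ (𝟙_ C))).M →ₗ[K] K),
      (∀ n w, F (phi2L Ω MD X (𝟙_ C) (n ⊗ₜ[K] w)) =
        G (phi2L Ω MD X (𝟙_ C) (n ⊗ₜ[K] w))) → F = G := fun F G h =>
    starF_ext Ω MD h
  apply hext
  intro n w
  obtain ⟨r, rfl⟩ := MD.phi0.surjective w
  rw [LinearMap.sum_apply, LinearMap.comp_apply, phi2L_runit, map_sum]
  have hterm : ∀ l, starF Ω MD g ((uB Ω MD).coord l)
      (phi2L Ω MD X (𝟙_ C) (n ⊗ₜ[K] (MD.phi0 r))) = r l • g ((Ω.obj X).aR l n) := by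
    intro l
    rw [starF_apply]
    have h1 : ∀ j, g ((Ω.obj X).aR j n) *
        (uB Ω MD).coord l ((Ω.obj (𝟙_ C)).aL j (MD.phi0 r)) =
        if l = j then g ((Ω.obj X).aR j n) * r j else 0 := by
      intro j
      rw [aL_phi0, map_smul, uB_coord_uB, smul_eq_mul]
      split_ifs with hj
      · rw [mul_one]
      · rw [mul_zero, mul_zero]
    rw [Finset.sum_congr rfl fun j _ => h1 j, Finset.sum_ite_eq, if_pos (Finset.mem_univ l),
      smul_eq_mul, mul_comm]
  rw [Finset.sum_congr rfl fun l _ => hterm l]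
  exact Finset.sum_congr rfl fun l _ => by rw [map_smul]

lemma uB_coord_comp_aL (a k : V) :
    (uB Ω MD).coord a ∘ₗ (Ω.obj (𝟙_ C)).aL k =
      if k = a then (uB Ω MD).coord a else 0 := by
  apply (uB Ω MD).ext
  intro j
  rw [LinearMap.comp_apply, aL_uB, apply_ite ((uB Ω MD).coord a), map_zero, uB_coord_uB]
  by_cases hka : k = a
  · rw [if_pos hka]
    subst hka
    by_cases hkj : k = j
    · rw [if_pos hkj, if_pos hkj, uB_coord_uB, if_pos hkj]
    · rw [if_neg hkj, uB_coord_uB, if_neg hkj]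
  · rw [if_neg hka, LinearMap.zero_apply]
    split_ifs with h1 h2
    · exact absurd (h1.trans h2.symm) hka
    · rfl
    · rfl

lemma uB_coord_comp_aR (a k : V) :
    (uB Ω MD).coord a ∘ₗ (Ω.obj (𝟙_ C)).aR k =
      if k = a then (uB Ω MD).coord a else 0 := by
  apply (uB Ω MD).ext
  intro j
  rw [LinearMap.comp_apply, aR_uB, apply_ite ((uB Ω MD).coord a), map_zero, uB_coord_uB]
  by_cases hka : k = a
  · rw [if_pos hka]
    subst hka
    by_cases hkj : k = j
    · rw [if_pos hkj, if_pos hkj, uB_coord_uB, if_pos hkj]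
    · rw [if_neg hkj, uB_coord_uB, if_neg hkj]
  · rw [if_neg hka, LinearMap.zero_apply]
    split_ifs with h1 h2
    · exact absurd (h1.trans h2.symm) hka
    · rfl
    · rfl

-- ### Lemmas depending on the dressed structure `D`

section WithD

variable (D : DressedStruct K V (CoendT K V Ω)) (hD : CoendDressedSpec K V Ω D)

include hD

lemma D_comul_k (X : C) {ι : Type} [Fintype ι] (b : Module.Basis ι K (Ω.obj X).M)
    (g : (Ω.obj X).M →ₗ[K] K) (m : (Ω.obj X).M) :
    D.comul (coendK K V Ω X (g ⊗ₜ[K] m)) =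
      ∑ j, (coendK K V Ω X (g ⊗ₜ[K] b j)) ⊗ₜ[K]
        (coendK K V Ω X ((b.coord j) ⊗ₜ[K] m)) :=
  hD.1 X ι inferInstance b g m

lemma D_counit_k (X : C) (g : (Ω.obj X).M →ₗ[K] K) (m : (Ω.obj X).M) :
    D.counit (coendK K V Ω X (g ⊗ₜ[K] m)) = g m :=
  hD.2.1 X g m

lemma D_eL_k (p : V × V) (X : C) (g : (Ω.obj X).M →ₗ[K] K) (m : (Ω.obj X).M) :
    D.eL p (coendK K V Ω X (g ⊗ₜ[K] m)) =
      coendK K V Ω X ((g ∘ₗ (Ω.obj X).aL p.1) ⊗ₜ[K] ((Ω.obj X).aL p.2 m)) :=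
  (hD.2.2 p X g m).1

lemma D_eR_k (p : V × V) (X : C) (g : (Ω.obj X).M →ₗ[K] K) (m : (Ω.obj X).M) :
    D.eR p (coendK K V Ω X (g ⊗ₜ[K] m)) =
      coendK K V Ω X ((g ∘ₗ (Ω.obj X).aR p.1) ⊗ₜ[K] ((Ω.obj X).aR p.2 m)) :=
  (hD.2.2 p X g m).2

lemma counit_pR_k (ν : V) (X : C) (g : (Ω.obj X).M →ₗ[K] K) (m : (Ω.obj X).M) :
    D.counit (D.toEBim.pR ν (coendK K V Ω X (g ⊗ₜ[K] m))) =
      g ((Ω.obj X).aR ν m) := by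
  classical
  rw [EBim.pR, LinearMap.sum_apply, map_sum]
  have hterm : ∀ l, D.counit (D.eR (l, ν) (coendK K V Ω X (g ⊗ₜ[K] m))) =
      if l = ν then g ((Ω.obj X).aR ν m) else 0 := by
    intro l
    rw [D_eR_k Ω D hD, D_counit_k Ω D hD, LinearMap.comp_apply, aR_orth_apply]
    split_ifs with h
    · rfl
    · rw [map_zero]
  rw [Finset.sum_congr rfl fun l _ => hterm l, Finset.sum_ite_eq',
    if_pos (Finset.mem_univ ν)]

lemma counit_pL_k (ν : V) (X : C) (g : (Ω.obj X).M →ₗ[K] K) (m : (Ω.obj X).M) :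
    D.counit (D.toEBim.pL ν (coendK K V Ω X (g ⊗ₜ[K] m))) =
      g ((Ω.obj X).aL ν m) := by
  classical
  rw [EBim.pL, LinearMap.sum_apply, map_sum]
  have hterm : ∀ l, D.counit (D.eL (l, ν) (coendK K V Ω X (g ⊗ₜ[K] m))) =
      if l = ν then g ((Ω.obj X).aL ν m) else 0 := by
    intro l
    rw [D_eL_k Ω D hD, D_counit_k Ω D hD, LinearMap.comp_apply, aL_orth_apply]
    split_ifs with h
    · rfl
    · rw [map_zero]
  rw [Finset.sum_congr rfl fun l _ => hterm l, Finset.sum_ite_eq',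
    if_pos (Finset.mem_univ ν)]

-- ### The monoid axioms

lemma cmul_balanced (p : V × V) (a b : CoendT K V Ω) :
    cmul Ω MD (D.eR p a) b = cmul Ω MD a (D.eL p b) := by
  have h : (cmul Ω MD).comp (D.eR p) = (cmul Ω MD).compl₂ (D.eL p) := by
    apply coend_ext2 Ω
    intro X g m Y h n
    rw [LinearMap.comp_apply, LinearMap.compl₂_apply, D_eR_k Ω D hD, D_eL_k Ω D hD,
      cmul_apply, cmul_apply, starF_balance, phi2L_balance]
  exact LinearMap.congr_fun (LinearMap.congr_fun h a) b

lemma cmul_map_eL (p : V × V) (a b : CoendT K V Ω) :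
    cmul Ω MD (D.eL p a) b = D.eL p (cmul Ω MD a b) := by
  have h : (cmul Ω MD).comp (D.eL p) = (cmul Ω MD).compr₂ (D.eL p) := by
    apply coend_ext2 Ω
    intro X g m Y h n
    rw [LinearMap.comp_apply, LinearMap.compr₂_apply, D_eL_k Ω D hD,
      cmul_apply, cmul_apply, D_eL_k Ω D hD, starF_aL, phi2L_aL]
  exact LinearMap.congr_fun (LinearMap.congr_fun h a) b

lemma cmul_map_eR (p : V × V) (a b : CoendT K V Ω) :
    cmul Ω MD a (D.eR p b) = D.eR p (cmul Ω MD a b) := by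
  have h : (cmul Ω MD).compl₂ (D.eR p) = (cmul Ω MD).compr₂ (D.eR p) := by
    apply coend_ext2 Ω
    intro X g m Y h n
    rw [LinearMap.compl₂_apply, LinearMap.compr₂_apply, D_eR_k Ω D hD,
      cmul_apply, cmul_apply, D_eR_k Ω D hD, starF_aR, phi2L_aR]
  exact LinearMap.congr_fun (LinearMap.congr_fun h a) b

set_option maxHeartbeats 1000000 in
set_option synthInstance.maxHeartbeats 200000 in
lemma cmul_comul (a b : CoendT K V Ω) :
    D.comul (cmul Ω MD a b) =
      (TensorProduct.map (TensorProduct.lift (cmul Ω MD))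
          (TensorProduct.lift (cmul Ω MD)))
        ((TensorProduct.tensorTensorTensorComm K (CoendT K V Ω) (CoendT K V Ω)
            (CoendT K V Ω) (CoendT K V Ω))
          (D.comul a ⊗ₜ[K] D.comul b)) := by
  have hmema : a ∈ Submodule.span K {x : CoendT K V Ω |
      ∃ (X : C) (g : (Ω.obj X).M →ₗ[K] K) (m : (Ω.obj X).M),
        x = coendK K V Ω X (g ⊗ₜ[K] m)} := by
    rw [coendK_span Ω]; exact Submodule.mem_top
  refine Submodule.span_induction (p := fun a _ => ∀ b : CoendT K V Ω,
    D.comul (cmul Ω MD a b) =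
      (TensorProduct.map (TensorProduct.lift (cmul Ω MD))
          (TensorProduct.lift (cmul Ω MD)))
        ((TensorProduct.tensorTensorTensorComm K (CoendT K V Ω) (CoendT K V Ω)
            (CoendT K V Ω) (CoendT K V Ω))
          (D.comul a ⊗ₜ[K] D.comul b))) ?_ ?_ ?_ ?_ hmema b
  · rintro x ⟨X, g, m, rfl⟩ b
    have hmemb : b ∈ Submodule.span K {y : CoendT K V Ω |
        ∃ (Y : C) (h : (Ω.obj Y).M →ₗ[K] K) (n : (Ω.obj Y).M),
          y = coendK K V Ω Y (h ⊗ₜ[K] n)} := by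
      rw [coendK_span Ω]; exact Submodule.mem_top
    refine Submodule.span_induction (p := fun b _ =>
      D.comul (cmul Ω MD (coendK K V Ω X (g ⊗ₜ[K] m)) b) =
        (TensorProduct.map (TensorProduct.lift (cmul Ω MD))
            (TensorProduct.lift (cmul Ω MD)))
          ((TensorProduct.tensorTensorTensorComm K (CoendT K V Ω) (CoendT K V Ω)
              (CoendT K V Ω) (CoendT K V Ω))
            (D.comul (coendK K V Ω X (g ⊗ₜ[K] m)) ⊗ₜ[K] D.comul b))) ?_ ?_ ?_ ?_ hmemb
    · rintro y ⟨Y, h, n, rfl⟩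
      set cB := Module.finBasis K (Ω.obj X).M with hcB
      set dB := Module.finBasis K (Ω.obj Y).M with hdB
      set bB := Module.finBasis K (Ω.obj (X ⊗ Y)).M with hbB
      rw [cmul_apply, D_comul_k Ω D hD (X ⊗ Y) bB, D_comul_k Ω D hD X cB,
        D_comul_k Ω D hD Y dB, TensorProduct.sum_tmul, map_sum, map_sum]
      have hinner : ∀ i,
          (TensorProduct.map (TensorProduct.lift (cmul Ω MD))
              (TensorProduct.lift (cmul Ω MD)))
            ((TensorProduct.tensorTensorTensorComm K (CoendT K V Ω) (CoendT K V Ω)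
                (CoendT K V Ω) (CoendT K V Ω))
              ((((coendK K V Ω X) (g ⊗ₜ[K] cB i)) ⊗ₜ[K]
                  ((coendK K V Ω X) ((cB.coord i) ⊗ₜ[K] m))) ⊗ₜ[K]
                (∑ j, ((coendK K V Ω Y) (h ⊗ₜ[K] dB j)) ⊗ₜ[K]
                  ((coendK K V Ω Y) ((dB.coord j) ⊗ₜ[K] n))))) =
          ∑ j, ((coendK K V Ω (X ⊗ Y)) ((starF Ω MD g h) ⊗ₜ[K]
              (phi2L Ω MD X Y ((cB i) ⊗ₜ[K] (dB j))))) ⊗ₜ[K]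
            ((coendK K V Ω (X ⊗ Y))
              ((starF Ω MD (cB.coord i) (dB.coord j)) ⊗ₜ[K]
                (phi2L Ω MD X Y (m ⊗ₜ[K] n)))) := by
        intro i
        rw [TensorProduct.tmul_sum, map_sum, map_sum]
        refine Finset.sum_congr rfl fun j _ => ?_
        rw [TensorProduct.tensorTensorTensorComm_tmul, TensorProduct.map_tmul,
          TensorProduct.lift.tmul, TensorProduct.lift.tmul, cmul_apply, cmul_apply]
      rw [Finset.sum_congr rfl fun i _ => hinner i]
      have hΦapp : ∀ (v : (Ω.obj (X ⊗ Y)).M) (f : (Ω.obj (X ⊗ Y)).M →ₗ[K] K),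
          ((TensorProduct.mk K (CoendT K V Ω) (CoendT K V Ω)).compl₁₂
            (coendK K V Ω (X ⊗ Y) ∘ₗ
              ((TensorProduct.mk K ((Ω.obj (X ⊗ Y)).M →ₗ[K] K) (Ω.obj (X ⊗ Y)).M)
                (starF Ω MD g h)))
            (coendK K V Ω (X ⊗ Y) ∘ₗ
              ((TensorProduct.mk K ((Ω.obj (X ⊗ Y)).M →ₗ[K] K)
                (Ω.obj (X ⊗ Y)).M).flip (phi2L Ω MD X Y (m ⊗ₜ[K] n))))) v f =
          ((coendK K V Ω (X ⊗ Y)) ((starF Ω MD g h) ⊗ₜ[K] v)) ⊗ₜ[K]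
            ((coendK K V Ω (X ⊗ Y)) (f ⊗ₜ[K] (phi2L Ω MD X Y (m ⊗ₜ[K] n)))) :=
        fun v f => rfl
      have hde := dual_expansion bB _ _
        (star_sum_coord Ω MD X Y cB dB)
        ((TensorProduct.mk K (CoendT K V Ω) (CoendT K V Ω)).compl₁₂
          (coendK K V Ω (X ⊗ Y) ∘ₗ
            ((TensorProduct.mk K ((Ω.obj (X ⊗ Y)).M →ₗ[K] K) (Ω.obj (X ⊗ Y)).M)
              (starF Ω MD g h)))
          (coendK K V Ω (X ⊗ Y) ∘ₗ
            ((TensorProduct.mk K ((Ω.obj (X ⊗ Y)).M →ₗ[K] K)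
              (Ω.obj (X ⊗ Y)).M).flip (phi2L Ω MD X Y (m ⊗ₜ[K] n)))))
      simp only [hΦapp] at hde
      rw [Fintype.sum_prod_type] at hde
      exact hde.symm
    · simp
    · intro y z _ _ hy hz
      simp only [map_add, LinearMap.add_apply, TensorProduct.tmul_add,
        TensorProduct.add_tmul, hy, hz]
    · intro c y _ hy
      rw [map_smul, map_smul, hy, map_smul, TensorProduct.tmul_smul, map_smul, map_smul]
  · intro b
    simp
  · intro x y _ _ hx hy b
    simp only [map_add, LinearMap.add_apply, TensorProduct.tmul_add,
      TensorProduct.add_tmul, hx b, hy b]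
  · intro c x _ hx b
    rw [map_smul, LinearMap.smul_apply, map_smul, hx b, map_smul,
      ← TensorProduct.smul_tmul', map_smul, map_smul]

lemma cmul_counit (a b : CoendT K V Ω) :
    D.counit (cmul Ω MD a b) =
      ∑ n : V, D.counit (D.toEBim.pR n a) * D.counit (D.toEBim.pL n b) := by
  have h : (cmul Ω MD).compr₂ D.counit =
      ∑ ν : V, (LinearMap.mul K K).compl₁₂ (D.counit ∘ₗ D.toEBim.pR ν)
        (D.counit ∘ₗ D.toEBim.pL ν) := by
    apply coend_ext2 Ω
    intro X g m Y h n
    rw [LinearMap.compr₂_apply, cmul_apply, D_counit_k Ω D hD, starF_apply]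
    rw [LinearMap.sum_apply, LinearMap.sum_apply]
    refine Finset.sum_congr rfl fun ν _ => ?_
    rw [LinearMap.compl₁₂_apply, LinearMap.comp_apply, LinearMap.comp_apply,
      counit_pR_k Ω D hD, counit_pL_k Ω D hD, LinearMap.mul_apply']
  have h3 := LinearMap.congr_fun (LinearMap.congr_fun h a) b
  simp only [LinearMap.compr₂_apply, LinearMap.sum_apply, LinearMap.compl₁₂_apply,
    LinearMap.comp_apply, LinearMap.mul_apply'] at h3
  exact h3

lemma eta_comul (p : V × V) :
    D.comul (etaL Ω MD (Pi.single p 1)) =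
      ∑ n : V, (etaL Ω MD (Pi.single (p.1, n) 1)) ⊗ₜ[K]
        (etaL Ω MD (Pi.single (n, p.2) 1)) := by
  rw [etaL_single, D_comul_k Ω D hD (𝟙_ C) (uB Ω MD)]
  exact Finset.sum_congr rfl fun n _ => by rw [etaL_single, etaL_single]

lemma eta_counit (p : V × V) :
    D.counit (etaL Ω MD (Pi.single p 1)) = if p.1 = p.2 then 1 else 0 := by
  rw [etaL_single, D_counit_k Ω D hD, uB_coord_uB]

lemma eta_eL_lem (p q : V × V) :
    D.eL p (etaL Ω MD (Pi.single q 1)) =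
      if p = q then etaL Ω MD (Pi.single q 1) else 0 := by
  rw [etaL_single, D_eL_k Ω D hD, uB_coord_comp_aL, aL_uB]
  by_cases h1 : p.1 = q.1
  · by_cases h2 : p.2 = q.2
    · rw [if_pos h1, if_pos h2, if_pos (Prod.ext_iff.mpr ⟨h1, h2⟩)]
    · rw [if_pos h1, if_neg h2, if_neg (fun h => h2 (congrArg Prod.snd h)),
        TensorProduct.tmul_zero, map_zero]
  · rw [if_neg h1, if_neg (fun h => h1 (congrArg Prod.fst h)),
      TensorProduct.zero_tmul, map_zero]

lemma eta_eR_lem (p q : V × V) :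
    D.eR p (etaL Ω MD (Pi.single q 1)) =
      if p = q then etaL Ω MD (Pi.single q 1) else 0 := by
  rw [etaL_single, D_eR_k Ω D hD, uB_coord_comp_aR, aR_uB]
  by_cases h1 : p.1 = q.1
  · by_cases h2 : p.2 = q.2
    · rw [if_pos h1, if_pos h2, if_pos (Prod.ext_iff.mpr ⟨h1, h2⟩)]
    · rw [if_pos h1, if_neg h2, if_neg (fun h => h2 (congrArg Prod.snd h)),
        TensorProduct.tmul_zero, map_zero]
  · rw [if_neg h1, if_neg (fun h => h1 (congrArg Prod.fst h)),
      TensorProduct.zero_tmul, map_zero]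

end WithD

lemma cmul_assoc (a b c : CoendT K V Ω) :
    cmul Ω MD (cmul Ω MD a b) c = cmul Ω MD a (cmul Ω MD b c) := by
  have h : (cmul Ω MD).compr₂ (cmul Ω MD) =
      (((LinearMap.llcomp K (CoendT K V Ω) (CoendT K V Ω) (CoendT K V Ω)).comp
        (cmul Ω MD)).compl₂ (cmul Ω MD)) := by
    apply coend_ext3 Ω
    intro X g m Y h n Z k p
    simp only [LinearMap.compr₂_apply, LinearMap.compl₂_apply, LinearMap.comp_apply,
      LinearMap.llcomp_apply]
    rw [cmul_apply, cmul_apply, cmul_apply, cmul_apply, starF_assoc, coendK_dinat,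
      phi2L_assoc]
  have h3 := LinearMap.congr_fun (LinearMap.congr_fun (LinearMap.congr_fun h a) b) c
  simpa only [LinearMap.compr₂_apply, LinearMap.compl₂_apply, LinearMap.comp_apply,
    LinearMap.llcomp_apply] using h3

lemma cmul_one_mul (a : CoendT K V Ω) : cmul Ω MD (etaL Ω MD 1) a = a := by
  have h : cmul Ω MD (etaL Ω MD 1) = LinearMap.id := by
    apply coend_ext1 Ω
    intro X g n
    rw [LinearMap.id_coe, id_eq, etaL_one, map_sum, LinearMap.sum_apply]
    have hterm : ∀ q : V × V,
        cmul Ω MD (etaL Ω MD (Pi.single q 1)) (coendK K V Ω X (g ⊗ₜ[K] n)) =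
        coendK K V Ω X
          ((starF Ω MD ((uB Ω MD).coord q.1) g ∘ₗ (Ω.map (λ_ X).inv).1) ⊗ₜ[K]
            ((Ω.obj X).aL q.2 n)) := by
      intro q
      rw [etaL_single, cmul_apply]
      have hsplit : starF Ω MD ((uB Ω MD).coord q.1) g =
          (starF Ω MD ((uB Ω MD).coord q.1) g ∘ₗ (Ω.map (λ_ X).inv).1) ∘ₗ
            (Ω.map (λ_ X).hom).1 := by
        apply LinearMap.ext
        intro x
        rw [LinearMap.comp_apply, LinearMap.comp_apply, omega_inv_hom]
      have hW : (Ω.map (λ_ X).hom).1 (phi2L Ω MD (𝟙_ C) X ((uB Ω MD q.2) ⊗ₜ[K] n)) =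
          (Ω.obj X).aL q.2 n := by
        rw [uB_apply, phi2L_lunit]
        have hite : ∀ l, (Pi.single q.2 1 : V → K) l • (Ω.obj X).aL l n =
            if l = q.2 then (Ω.obj X).aL q.2 n else 0 := by
          intro l
          rw [Pi.single_apply]
          split_ifs with hl
          · subst hl; rw [one_smul]
          · rw [zero_smul]
        rw [Finset.sum_congr rfl fun l _ => hite l, Finset.sum_ite_eq',
          if_pos (Finset.mem_univ q.2)]
      conv_lhs => rw [hsplit]
      rw [coendK_dinat, hW]
    rw [Finset.sum_congr rfl fun q _ => hterm q, Fintype.sum_prod_type, Finset.sum_comm]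
    have hcol : ∀ q2 : V,
        ∑ q1 : V, coendK K V Ω X
          ((starF Ω MD ((uB Ω MD).coord q1) g ∘ₗ (Ω.map (λ_ X).inv).1) ⊗ₜ[K]
            ((Ω.obj X).aL q2 n)) =
        coendK K V Ω X (g ⊗ₜ[K] ((Ω.obj X).aL q2 n)) := by
      intro q2
      have hsum : (∑ q1 : V, starF Ω MD ((uB Ω MD).coord q1) g ∘ₗ
          (Ω.map (λ_ X).inv).1) = g := by
        apply LinearMap.ext
        intro x
        have h5 := LinearMap.congr_fun (starF_sum_lunit Ω MD X g)
          ((Ω.map (λ_ X).inv).1 x)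
        rw [LinearMap.sum_apply] at h5
        rw [LinearMap.sum_apply]
        simp only [LinearMap.comp_apply] at h5 ⊢
        rw [h5, omega_hom_inv]
      rw [← map_sum, ← TensorProduct.sum_tmul, hsum]
    rw [Finset.sum_congr rfl fun q2 _ => hcol q2, ← map_sum, ← TensorProduct.tmul_sum,
      sum_aL_apply]
  exact LinearMap.congr_fun h a

lemma cmul_mul_one (a : CoendT K V Ω) : cmul Ω MD a (etaL Ω MD 1) = a := by
  have h : (cmul Ω MD).flip (etaL Ω MD 1) = LinearMap.id := by
    apply coend_ext1 Ω
    intro X g n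
    rw [LinearMap.id_coe, id_eq, LinearMap.flip_apply, etaL_one, map_sum]
    have hterm : ∀ q : V × V,
        cmul Ω MD (coendK K V Ω X (g ⊗ₜ[K] n)) (etaL Ω MD (Pi.single q 1)) =
        coendK K V Ω X
          ((starF Ω MD g ((uB Ω MD).coord q.1) ∘ₗ (Ω.map (ρ_ X).inv).1) ⊗ₜ[K]
            ((Ω.obj X).aR q.2 n)) := by
      intro q
      rw [etaL_single, cmul_apply]
      have hsplit : starF Ω MD g ((uB Ω MD).coord q.1) =
          (starF Ω MD g ((uB Ω MD).coord q.1) ∘ₗ (Ω.map (ρ_ X).inv).1) ∘ₗ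
            (Ω.map (ρ_ X).hom).1 := by
        apply LinearMap.ext
        intro x
        rw [LinearMap.comp_apply, LinearMap.comp_apply, omega_inv_hom]
      have hW : (Ω.map (ρ_ X).hom).1 (phi2L Ω MD X (𝟙_ C) (n ⊗ₜ[K] (uB Ω MD q.2))) =
          (Ω.obj X).aR q.2 n := by
        rw [uB_apply, phi2L_runit]
        have hite : ∀ l, (Pi.single q.2 1 : V → K) l • (Ω.obj X).aR l n =
            if l = q.2 then (Ω.obj X).aR q.2 n else 0 := by
          intro l
          rw [Pi.single_apply]
          split_ifs with hl
          · subst hl; rw [one_smul]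
          · rw [zero_smul]
        rw [Finset.sum_congr rfl fun l _ => hite l, Finset.sum_ite_eq',
          if_pos (Finset.mem_univ q.2)]
      conv_lhs => rw [hsplit]
      rw [coendK_dinat, hW]
    rw [Finset.sum_congr rfl fun q _ => hterm q, Fintype.sum_prod_type, Finset.sum_comm]
    have hcol : ∀ q2 : V,
        ∑ q1 : V, coendK K V Ω X
          ((starF Ω MD g ((uB Ω MD).coord q1) ∘ₗ (Ω.map (ρ_ X).inv).1) ⊗ₜ[K]
            ((Ω.obj X).aR q2 n)) =
        coendK K V Ω X (g ⊗ₜ[K] ((Ω.obj X).aR q2 n)) := by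
      intro q2
      have hsum : (∑ q1 : V, starF Ω MD g ((uB Ω MD).coord q1) ∘ₗ
          (Ω.map (ρ_ X).inv).1) = g := by
        apply LinearMap.ext
        intro x
        have h5 := LinearMap.congr_fun (starF_sum_runit Ω MD X g)
          ((Ω.map (ρ_ X).inv).1 x)
        rw [LinearMap.sum_apply] at h5
        rw [LinearMap.sum_apply]
        simp only [LinearMap.comp_apply] at h5 ⊢
        rw [h5, omega_hom_inv]
      rw [← map_sum, ← TensorProduct.sum_tmul, hsum]
    rw [Finset.sum_congr rfl fun q2 _ => hcol q2, ← map_sum, ← TensorProduct.tmul_sum,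
      sum_aR_apply]
  have := LinearMap.congr_fun h a
  rw [LinearMap.flip_apply] at this
  exact this

lemma coendMonoid (D : DressedStruct K V (CoendT K V Ω))
    (hD : CoendDressedSpec K V Ω D) :
    MonoidInDr K V D (cmul Ω MD) (etaL Ω MD) where
  balanced := cmul_balanced Ω MD D hD
  map_eL := cmul_map_eL Ω MD D hD
  map_eR := cmul_map_eR Ω MD D hD
  comul_mul := cmul_comul Ω MD D hD
  counit_mul := cmul_counit Ω MD D hD
  comul_eta := eta_comul Ω MD D hD
  counit_eta := eta_counit Ω MD D hD
  eta_eL := eta_eL_lem Ω MD D hD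
  eta_eR := eta_eR_lem Ω MD D hD
  mul_assoc := cmul_assoc Ω MD
  one_mul := cmul_one_mul Ω MD
  mul_one := cmul_mul_one Ω MD

-- ### The characterising properties

set_option maxHeartbeats 1000000 in
set_option synthInstance.maxHeartbeats 400000 in
lemma coend_mul_char : CoendMulChar K V Ω MD (cmul Ω MD) := by
  intro X Y a b
  set cB := Module.finBasis K (Ω.obj X).M with hcB
  set dB := Module.finBasis K (Ω.obj Y).M with hdB
  set bB := Module.finBasis K (Ω.obj (X ⊗ Y)).M with hbB
  rw [show (MD.phi2 X Y) ((rbal (Ω.obj X) (Ω.obj Y)).mkQ (a ⊗ₜ[K] b)) =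
    phi2L Ω MD X Y (a ⊗ₜ[K] b) from rfl]
  rw [show (MD.phi2 X Y).toLinearMap ∘ₗ (rbal (Ω.obj X) (Ω.obj Y)).mkQ =
    phi2L Ω MD X Y from rfl]
  rw [coendDelta_apply Ω (X ⊗ Y), coendDelta_apply Ω X, coendDelta_apply Ω Y]
  rw [TensorProduct.sum_tmul, map_sum, map_sum]
  have hinner : ∀ i,
      (TensorProduct.map (phi2L Ω MD X Y) (TensorProduct.lift (cmul Ω MD)))
        ((TensorProduct.tensorTensorTensorComm K (Ω.obj X).M (CoendT K V Ω)
            (Ω.obj Y).M (CoendT K V Ω))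
          (((cB i) ⊗ₜ[K] ((coendK K V Ω X) ((cB.coord i) ⊗ₜ[K] a))) ⊗ₜ[K]
            (∑ j, (dB j) ⊗ₜ[K] ((coendK K V Ω Y) ((dB.coord j) ⊗ₜ[K] b))))) =
      ∑ j, (phi2L Ω MD X Y ((cB i) ⊗ₜ[K] (dB j))) ⊗ₜ[K]
        ((coendK K V Ω (X ⊗ Y))
          ((starF Ω MD (cB.coord i) (dB.coord j)) ⊗ₜ[K]
            (phi2L Ω MD X Y (a ⊗ₜ[K] b)))) := by
    intro i
    rw [TensorProduct.tmul_sum, map_sum, map_sum]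
    refine Finset.sum_congr rfl fun j _ => ?_
    rw [TensorProduct.tensorTensorTensorComm_tmul, TensorProduct.map_tmul,
      TensorProduct.lift.tmul, cmul_apply]
  rw [Finset.sum_congr rfl fun i _ => hinner i]
  have hΦapp : ∀ (v : (Ω.obj (X ⊗ Y)).M) (f : (Ω.obj (X ⊗ Y)).M →ₗ[K] K),
      ((TensorProduct.mk K (Ω.obj (X ⊗ Y)).M (CoendT K V Ω)).compl₂
        (coendK K V Ω (X ⊗ Y) ∘ₗ
          ((TensorProduct.mk K ((Ω.obj (X ⊗ Y)).M →ₗ[K] K) (Ω.obj (X ⊗ Y)).M).flip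
            (phi2L Ω MD X Y (a ⊗ₜ[K] b))))) v f =
      v ⊗ₜ[K] ((coendK K V Ω (X ⊗ Y))
        (f ⊗ₜ[K] (phi2L Ω MD X Y (a ⊗ₜ[K] b)))) := fun v f => rfl
  have hde := dual_expansion bB _ _ (star_sum_coord Ω MD X Y cB dB)
    ((TensorProduct.mk K (Ω.obj (X ⊗ Y)).M (CoendT K V Ω)).compl₂
      (coendK K V Ω (X ⊗ Y) ∘ₗ
        ((TensorProduct.mk K ((Ω.obj (X ⊗ Y)).M →ₗ[K] K) (Ω.obj (X ⊗ Y)).M).flip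
          (phi2L Ω MD X Y (a ⊗ₜ[K] b)))))
  simp only [hΦapp] at hde
  rw [Fintype.sum_prod_type] at hde
  exact hde.symm

lemma coend_eta_char : CoendEtaChar K V Ω MD (etaL Ω MD) := by
  intro l
  rw [coendDelta_basis Ω (𝟙_ C) (uB Ω MD) (MD.phi0 (Pi.single l 1))]
  refine Finset.sum_congr rfl fun mm _ => ?_
  rw [etaL_single]
  rw [show (MD.phi0 (Pi.single l 1) : (Ω.obj (𝟙_ C)).M) = uB Ω MD l from
    (uB_apply Ω MD l).symm]
  rw [uB_apply]

-- ### The `V`-face algebra structure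

set_option maxHeartbeats 2000000 in
set_option synthInstance.maxHeartbeats 400000 in
lemma coendVFace (D : DressedStruct K V (CoendT K V Ω))
    (hD : CoendDressedSpec K V Ω D) :
    letI : Ring (CoendT K V Ω) := ringOf (coendMonoid Ω MD D hD)
    letI : Algebra K (CoendT K V Ω) := algebraOf (coendMonoid Ω MD D hD)
    ∃ F : VFace K V (CoendT K V Ω),
      F.comul = D.comul ∧ F.counit = D.counit ∧
      (∀ p : V × V, F.eo p.1 * F.ep p.2 = etaL Ω MD (Pi.single p 1)) := by
  classical
  have hm := coendMonoid Ω MD D hD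
  letI instR : Ring (CoendT K V Ω) := ringOf (coendMonoid Ω MD D hD)
  letI instA : Algebra K (CoendT K V Ω) := algebraOf (coendMonoid Ω MD D hD)
  have hmul : ∀ a b : CoendT K V Ω, a * b = cmul Ω MD a b := fun a b => rfl
  have hone : (1 : CoendT K V Ω) = etaL Ω MD 1 := rfl
  -- η is multiplicative on the idempotents
  have f1 : ∀ (p : V × V) (b : CoendT K V Ω),
      cmul Ω MD (etaL Ω MD (Pi.single p 1)) b = D.eL p b := by
    intro p b
    have h0 : etaL Ω MD (Pi.single p 1) = D.eL p (etaL Ω MD 1) := by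
      rw [etaL_one, map_sum, Finset.sum_congr rfl fun q _ => hm.eta_eL p q,
        Finset.sum_ite_eq, if_pos (Finset.mem_univ p)]
    rw [h0, hm.map_eL, hm.one_mul]
  have f2 : ∀ (p : V × V) (a : CoendT K V Ω),
      cmul Ω MD a (etaL Ω MD (Pi.single p 1)) = D.eR p a := by
    intro p a
    have h0 : etaL Ω MD (Pi.single p 1) = D.eR p (etaL Ω MD 1) := by
      rw [etaL_one, map_sum, Finset.sum_congr rfl fun q _ => hm.eta_eR p q,
        Finset.sum_ite_eq, if_pos (Finset.mem_univ p)]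
    rw [h0, hm.map_eR, hm.mul_one]
  have key2 : ∀ l a b m : V,
      cmul Ω MD (etaL Ω MD (Pi.single (l, a) 1)) (etaL Ω MD (Pi.single (b, m) 1)) =
      if l = b ∧ a = m then etaL Ω MD (Pi.single (l, m) 1) else 0 := by
    intro l a b m
    rw [f1, hm.eta_eL]
    by_cases h : ((l, a) : V × V) = (b, m)
    · rw [if_pos h, if_pos ⟨congrArg Prod.fst h, congrArg Prod.snd h⟩]
      have h1 : b = l := (congrArg Prod.fst h).symm
      have h2 : m = a := (congrArg Prod.snd h).symm
      subst h1; subst h2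
      rfl
    · rw [if_neg h, if_neg (fun hc => h (Prod.ext_iff.mpr hc))]
  -- the face idempotents
  set eoF : V → CoendT K V Ω :=
    fun l => ∑ mm : V, etaL Ω MD (Pi.single (l, mm) 1) with heoF
  set epF : V → CoendT K V Ω :=
    fun mm => ∑ l : V, etaL Ω MD (Pi.single (l, mm) 1) with hepF
  have hmulsum : ∀ (s t : V → V × V),
      (∑ a : V, etaL Ω MD (Pi.single (s a) 1)) * (∑ b : V, etaL Ω MD (Pi.single (t b) 1)) =
      ∑ a : V, ∑ b : V, cmul Ω MD (etaL Ω MD (Pi.single (s a) 1))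
        (etaL Ω MD (Pi.single (t b) 1)) := by
    intro s t
    have h1 : cmul Ω MD (∑ a : V, etaL Ω MD (Pi.single (s a) 1)) =
        ∑ a : V, cmul Ω MD (etaL Ω MD (Pi.single (s a) 1)) := map_sum _ _ _
    rw [hmul, h1, LinearMap.sum_apply]
    exact Finset.sum_congr rfl fun a _ => map_sum _ _ _
  have eo_mul_ep : ∀ l m : V, eoF l * epF m = etaL Ω MD (Pi.single (l, m) 1) := by
    intro l m
    rw [heoF, hepF]
    dsimp only
    rw [hmulsum (fun a => (l, a)) (fun b => (b, m))]
    have hin : ∀ a : V, ∑ b : V, cmul Ω MD (etaL Ω MD (Pi.single (l, a) 1))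
        (etaL Ω MD (Pi.single (b, m) 1)) =
        if a = m then etaL Ω MD (Pi.single (l, m) 1) else 0 := by
      intro a
      rw [Finset.sum_congr rfl fun b _ => key2 l a b m]
      by_cases ham : a = m
      · rw [if_pos ham]
        have : ∀ b : V, (if l = b ∧ a = m then etaL Ω MD (Pi.single (l, m) 1) else 0) =
            if l = b then etaL Ω MD (Pi.single (l, m) 1) else 0 := by
          intro b
          by_cases hlb : l = b
          · rw [if_pos ⟨hlb, ham⟩, if_pos hlb]
          · rw [if_neg (fun hc => hlb hc.1), if_neg hlb]
        rw [Finset.sum_congr rfl fun b _ => this b, Finset.sum_ite_eq,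
          if_pos (Finset.mem_univ l)]
      · rw [if_neg ham, Finset.sum_eq_zero]
        intro b _
        rw [if_neg (fun hc => ham hc.2)]
    rw [Finset.sum_congr rfl fun a _ => hin a, Finset.sum_ite_eq',
      if_pos (Finset.mem_univ m)]
  have ep_mul_eo : ∀ l m : V, epF m * eoF l = etaL Ω MD (Pi.single (l, m) 1) := by
    intro l m
    rw [heoF, hepF]
    dsimp only
    rw [hmulsum (fun a => (a, m)) (fun b => (l, b))]
    have hin : ∀ a : V, ∑ b : V, cmul Ω MD (etaL Ω MD (Pi.single (a, m) 1))
        (etaL Ω MD (Pi.single (l, b) 1)) =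
        if a = l then etaL Ω MD (Pi.single (l, m) 1) else 0 := by
      intro a
      rw [Finset.sum_congr rfl fun b _ => key2 a m l b]
      by_cases hal : a = l
      · rw [if_pos hal]
        have : ∀ b : V, (if a = l ∧ m = b then etaL Ω MD (Pi.single (a, b) 1) else 0) =
            if m = b then etaL Ω MD (Pi.single (l, m) 1) else 0 := by
          intro b
          by_cases hmb : m = b
          · rw [if_pos ⟨hal, hmb⟩, if_pos hmb, ← hmb, hal]
          · rw [if_neg (fun hc => hmb hc.2), if_neg hmb]
        rw [Finset.sum_congr rfl fun b _ => this b, Finset.sum_ite_eq,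
          if_pos (Finset.mem_univ m)]
      · rw [if_neg hal, Finset.sum_eq_zero]
        intro b _
        rw [if_neg (fun hc => hal hc.1)]
    rw [Finset.sum_congr rfl fun a _ => hin a, Finset.sum_ite_eq',
      if_pos (Finset.mem_univ l)]
  have heo_orth : ∀ l m : V, eoF l * eoF m = if l = m then eoF l else 0 := by
    intro l m
    rw [heoF]
    dsimp only
    rw [hmulsum (fun a => (l, a)) (fun b => (m, b))]
    have hin : ∀ a : V, ∑ b : V, cmul Ω MD (etaL Ω MD (Pi.single (l, a) 1))
        (etaL Ω MD (Pi.single (m, b) 1)) =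
        if l = m then etaL Ω MD (Pi.single (l, a) 1) else 0 := by
      intro a
      rw [Finset.sum_congr rfl fun b _ => key2 l a m b]
      by_cases hlm : l = m
      · rw [if_pos hlm]
        have : ∀ b : V, (if l = m ∧ a = b then etaL Ω MD (Pi.single (l, b) 1) else 0) =
            if a = b then etaL Ω MD (Pi.single (l, a) 1) else 0 := by
          intro b
          by_cases hab : a = b
          · rw [if_pos ⟨hlm, hab⟩, if_pos hab, hab]
          · rw [if_neg (fun hc => hab hc.2), if_neg hab]
        rw [Finset.sum_congr rfl fun b _ => this b, Finset.sum_ite_eq,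
          if_pos (Finset.mem_univ a)]
      · rw [if_neg hlm, Finset.sum_eq_zero]
        intro b _
        rw [if_neg (fun hc => hlm hc.1)]
    rw [Finset.sum_congr rfl fun a _ => hin a]
    by_cases hlm : l = m
    · rw [if_pos hlm]
      exact Finset.sum_congr rfl fun a _ => by rw [if_pos hlm]
    · rw [if_neg hlm, Finset.sum_eq_zero]
      intro a _
      rw [if_neg hlm]
  have hep_orth : ∀ l m : V, epF l * epF m = if l = m then epF l else 0 := by
    intro l m
    rw [hepF]
    dsimp only
    rw [hmulsum (fun a => (a, l)) (fun b => (b, m))]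
    have hin : ∀ a : V, ∑ b : V, cmul Ω MD (etaL Ω MD (Pi.single (a, l) 1))
        (etaL Ω MD (Pi.single (b, m) 1)) =
        if l = m then etaL Ω MD (Pi.single (a, l) 1) else 0 := by
      intro a
      rw [Finset.sum_congr rfl fun b _ => key2 a l b m]
      by_cases hlm : l = m
      · rw [if_pos hlm]
        have : ∀ b : V, (if a = b ∧ l = m then etaL Ω MD (Pi.single (a, m) 1) else 0) =
            if a = b then etaL Ω MD (Pi.single (a, l) 1) else 0 := by
          intro b
          by_cases hab : a = b
          · rw [if_pos ⟨hab, hlm⟩, if_pos hab, hlm]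
          · rw [if_neg (fun hc => hab hc.1), if_neg hab]
        rw [Finset.sum_congr rfl fun b _ => this b, Finset.sum_ite_eq,
          if_pos (Finset.mem_univ a)]
      · rw [if_neg hlm, Finset.sum_eq_zero]
        intro b _
        rw [if_neg (fun hc => hlm hc.2)]
    rw [Finset.sum_congr rfl fun a _ => hin a]
    by_cases hlm : l = m
    · rw [if_pos hlm]
      exact Finset.sum_congr rfl fun a _ => by rw [if_pos hlm]
    · rw [if_neg hlm, Finset.sum_eq_zero]
      intro a _
      rw [if_neg hlm]
  -- products with the face idempotents
  have hepR : ∀ (n : V) (a : CoendT K V Ω), a * epF n = D.toEBim.pR n a := by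
    intro n a
    have h1 : a * epF n = ∑ l : V, D.eR (l, n) a := by
      rw [hepF]
      dsimp only
      rw [hmul, map_sum]
      exact Finset.sum_congr rfl fun l _ => f2 (l, n) a
    have h0 : D.toEBim.pR n = ∑ l : V, D.eR (l, n) := rfl
    have h2 : D.toEBim.pR n a = ∑ l : V, D.eR (l, n) a := by
      rw [h0, LinearMap.sum_apply]
    rw [h1, h2]
  have heoL : ∀ (n : V) (b : CoendT K V Ω), eoF n * b = D.toEBim.oL n b := by
    intro n b
    have h1 : eoF n * b = ∑ mm : V, D.eL (n, mm) b := by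
      rw [heoF]
      dsimp only
      rw [hmul]
      rw [show cmul Ω MD (∑ mm : V, etaL Ω MD (Pi.single (n, mm) 1)) =
        ∑ mm : V, cmul Ω MD (etaL Ω MD (Pi.single (n, mm) 1)) from map_sum _ _ _,
        LinearMap.sum_apply]
      exact Finset.sum_congr rfl fun mm _ => f1 (n, mm) b
    have h0 : D.toEBim.oL n = ∑ mm : V, D.eL (n, mm) := rfl
    have h2 : D.toEBim.oL n b = ∑ mm : V, D.eL (n, mm) b := by
      rw [h0, LinearMap.sum_apply]
    rw [h1, h2]
  -- counit of oL equals counit of pL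
  have hsum_oR : ∀ c : CoendT K V Ω, (∑ m : V, D.toEBim.oR m c) = c := by
    intro c
    have h1 : (∑ m : V, D.toEBim.oR m c) = ∑ p : V × V, D.eR p c := by
      rw [Fintype.sum_prod_type]
      exact Finset.sum_congr rfl fun m _ => by rw [EBim.oR, LinearMap.sum_apply]
    rw [h1, ← LinearMap.sum_apply, D.sum_eR, LinearMap.id_apply]
  have hsum_pR : ∀ c : CoendT K V Ω, (∑ m : V, D.toEBim.pR m c) = c := by
    intro c
    have h1 : (∑ m : V, D.toEBim.pR m c) = ∑ p : V × V, D.eR p c := by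
      rw [Fintype.sum_prod_type, Finset.sum_comm]
      exact Finset.sum_congr rfl fun m _ => by rw [EBim.pR, LinearMap.sum_apply]
    rw [h1, ← LinearMap.sum_apply, D.sum_eR, LinearMap.id_apply]
  have hoL_pL : ∀ (n : V) (c : CoendT K V Ω),
      D.counit (D.toEBim.oL n c) = D.counit (D.toEBim.pL n c) := by
    intro n c
    calc D.counit (D.toEBim.oL n c)
        = D.counit (D.toEBim.oL n (∑ m : V, D.toEBim.oR m c)) := by rw [hsum_oR]
      _ = ∑ m : V, D.counit (D.toEBim.oL n (D.toEBim.oR m c)) := by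
          rw [map_sum, map_sum]
      _ = ∑ m : V, D.counit (D.toEBim.pL n (D.toEBim.pR m c)) :=
          Finset.sum_congr rfl fun m _ => D.counit_act n m c
      _ = D.counit (D.toEBim.pL n (∑ m : V, D.toEBim.pR m c)) := by
          rw [map_sum, map_sum]
      _ = D.counit (D.toEBim.pL n c) := by rw [hsum_pR]
  -- the tensor-square multiplication lemma
  have key3 : ∀ z w : @TensorProduct K _ (CoendT K V Ω) (CoendT K V Ω) _ _ instA.toModule
      instA.toModule,
      (TensorProduct.map (TensorProduct.lift (cmul Ω MD))
          (TensorProduct.lift (cmul Ω MD)))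
        ((TensorProduct.tensorTensorTensorComm K (CoendT K V Ω) (CoendT K V Ω)
            (CoendT K V Ω) (CoendT K V Ω)) (z ⊗ₜ[K] w)) = z * w := by
    intro z w
    induction z using TensorProduct.induction_on with
    | zero => erw [TensorProduct.zero_tmul, map_zero]; exact (zero_mul w).symm
    | add z1 z2 h1 h2 =>
      erw [TensorProduct.add_tmul, map_add, map_add, h1, h2, add_mul]
      rfl
    | tmul a1 a2 =>
      induction w using TensorProduct.induction_on with
      | zero => erw [TensorProduct.tmul_zero, map_zero]; exact (mul_zero (a1 ⊗ₜ[K] a2 : @TensorProduct K _ (CoendT K V Ω) (CoendT K V Ω) _ _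
          instA.toModule instA.toModule)).symm
      | add w1 w2 h1 h2 =>
        erw [TensorProduct.tmul_add, map_add, map_add, h1, h2, mul_add]
        rfl
      | tmul b1 b2 =>
        erw [TensorProduct.tensorTensorTensorComm_tmul, TensorProduct.map_tmul,
          TensorProduct.lift.tmul, TensorProduct.lift.tmul,
          Algebra.TensorProduct.tmul_mul_tmul]
        rfl
  refine ⟨{
    comul := D.comul
    counit := D.counit
    coassoc := D.coassoc
    counit_comul := D.counit_comul
    comul_counit := D.comul_counit
    eo := eoF
    ep := epF
    eo_orth := heo_orth
    ep_orth := hep_orth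
    eo_ep_comm := fun l m => by rw [eo_mul_ep, ep_mul_eo]
    sum_eo := by
      rw [heoF]
      dsimp only
      rw [show (1 : CoendT K V Ω) = etaL Ω MD 1 from rfl, etaL_one,
        Fintype.sum_prod_type]
      rfl
    sum_ep := by
      rw [hepF]
      dsimp only
      rw [show (1 : CoendT K V Ω) = etaL Ω MD 1 from rfl, etaL_one,
        Fintype.sum_prod_type, Finset.sum_comm]
      rfl
    comul_face := fun l m => by
      rw [eo_mul_ep]; erw [hm.comul_eta (l, m)]
      exact Finset.sum_congr rfl fun n _ => by rw [eo_mul_ep, eo_mul_ep]; rfl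
    counit_face := fun l m => by rw [eo_mul_ep]; erw [hm.counit_eta (l, m)]
    comul_mul := fun a b => by
      rw [hmul]; erw [hm.comul_mul, key3]
      rfl
    counit_mul := fun a b => by
      rw [hmul]; erw [hm.counit_mul]
      refine Finset.sum_congr rfl fun n _ => ?_
      rw [← hepR n a, ← hoL_pL n b, ← heoL n b]
      rfl
  }, rfl, rfl, fun p => eo_mul_ep p.1 p.2⟩

end Star

end Aux
section Stmt16

open CategoryTheory MonoidalCategory

variable (K : Type) [Field K] (V : Type) [Fintype V] [DecidableEq V]
variable {C : Type} [SmallCategory C] [MonoidalCategory C] (Ω : C ⥤ Bmd K V)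

/-- STATEMENT 16: if `(C, Ω)` is a category with `V`-face such that `C` is
monoidal and `Ω` is a monoidal functor (with structure isomorphisms `φ₂`,
`φ₀`), then the induced maps `m = C(⊗, φ₂) ∘ φ₂` and `η = C(I, φ₀)` make the
coend `C(Ω)` a monoid in `DrCoalg_V`, hence a `V`-face algebra; moreover `Ω`
lifts to a (monoidal) functor into the comodules of `C(Ω)`. -/
theorem coend_face_algebra (MD : MonData K V Ω)
    (D : DressedStruct K V (CoendT K V Ω)) (hD : CoendDressedSpec K V Ω D) :
    ∃ (mul : CoendT K V Ω →ₗ[K] CoendT K V Ω →ₗ[K] CoendT K V Ω)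
      (η : (V × V → K) →ₗ[K] CoendT K V Ω)
      (hm : MonoidInDr K V D mul η),
      CoendMulChar K V Ω MD mul ∧ CoendEtaChar K V Ω MD η ∧
      (∀ (X Y : C) (f : X ⟶ Y) (m : (Ω.obj X).M),
        coendDelta K V Ω Y ((Ω.map f).1 m) =
          (TensorProduct.map (Ω.map f).1 LinearMap.id) (coendDelta K V Ω X m)) ∧
      (letI : Ring (CoendT K V Ω) := ringOf hm
       letI : Algebra K (CoendT K V Ω) := algebraOf hm
       ∃ F : VFace K V (CoendT K V Ω),
         F.comul = D.comul ∧ F.counit = D.counit ∧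
         (∀ p : V × V, F.eo p.1 * F.ep p.2 = η (Pi.single p 1))) :=
  ⟨cmul Ω MD, etaL Ω MD, coendMonoid Ω MD D hD,
    coend_mul_char Ω MD, coend_eta_char Ω MD,
    fun X Y f m => coendDelta_dinat Ω X Y f m,
    coendVFace Ω MD D hD⟩

end Stmt16
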